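/- arXiv:2209.02224 — 4 statements merged into one kernel-verified Lean document; each statement's English description precedes it below -/
import Mathlib

section
/- Let L > 0 and let q₁, q₂ : [0, L] → ℝ be continuous. Suppose v, e, w : [0, L] → ℝ³ are C¹ and satisfy vₛ = q₁ e + q₂ w, eₛ = −q₁ v, wₛ = −q₂ v on [0, L], with initial values (v, e, w)(0) = (e₁, −e₂, e₃). Then for every s ∈ [0, L] the triple {v(s), e(s), w(s)} is an orthonormal basis of ℝ³ and moreover v(s) × e(s) = −w(s) and v(s) × w(s) = e(s). -/
open Real MeasureTheory Set

noncomputable section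

/-- Euclidean dot product on ℝ³ (vectors as `Fin 3 → ℝ`). -/
def dot3 (a b : Fin 3 → ℝ) : ℝ := a 0 * b 0 + a 1 * b 1 + a 2 * b 2

/-- Euclidean norm on ℝ³. -/
def norm3 (a : Fin 3 → ℝ) : ℝ := Real.sqrt (dot3 a a)

/-- Cross product on ℝ³. -/
def cross3 (a b : Fin 3 → ℝ) : Fin 3 → ℝ :=
  ![a 1 * b 2 - a 2 * b 1, a 2 * b 0 - a 0 * b 2, a 0 * b 1 - a 1 * b 0]

/-- Partial derivative in the first (space) variable. -/
def pS {E : Type*} [NormedAddCommGroup E] [NormedSpace ℝ E]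
    (f : ℝ → ℝ → E) (s t : ℝ) : E := deriv (fun s' => f s' t) s

/-- Partial derivative in the second (time) variable. -/
def pT {E : Type*} [NormedAddCommGroup E] [NormedSpace ℝ E]
    (f : ℝ → ℝ → E) (s t : ℝ) : E := deriv (fun t' => f s t') t

/-- The Sobolev `H^m` norm on `(0, L)` of an ℝ³-valued function. -/
def sobNorm3 (m : ℕ) (L : ℝ) (f : ℝ → Fin 3 → ℝ) : ℝ :=
  Real.sqrt (∑ k ∈ Finset.range (m + 1), ∫ s in (0:ℝ)..L, norm3 (iteratedDeriv k f s) ^ 2)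

/-- The Sobolev `H^m` norm on `(0, L)` of a ℂ-valued function. -/
def sobNormC (m : ℕ) (L : ℝ) (f : ℝ → ℂ) : ℝ :=
  Real.sqrt (∑ k ∈ Finset.range (m + 1), ∫ s in (0:ℝ)..L, ‖iteratedDeriv k f s‖ ^ 2)

/-- Sup (`L^∞`) norm on `[0, L]`. -/
def supIcc (f : ℝ → ℝ) (L : ℝ) : ℝ := ⨆ s : Set.Icc (0:ℝ) L, |f (s : ℝ)|

/-! Let `F` be the matrix with rows `v, e, w`. The system reads `F' = A F` with the skew-symmetric
`A = [[0, q₁, q₂], [-q₁, 0, 0], [-q₂, 0, 0]]`, so `(Fᵀ F)' = Fᵀ (Aᵀ + A) F = 0` and `Fᵀ F` keeps its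
initial value `1`: `F` is orthogonal at every `s`. Likewise `det F = (v × e) · w` has derivative
`tr A · det F = 0` and stays `-1`; expanding `v × e` and `v × w` in the orthonormal basis
`v, e, w` then gives the cross-product relations. -/

section CrossProduct

variable (a b c : Fin 3 → ℝ)

theorem dot3_cross3_left : dot3 (cross3 a b) a = 0 := by
  simp only [dot3, cross3, Matrix.cons_val_zero, Matrix.cons_val_one, Matrix.cons_val]; ring

theorem dot3_cross3_right : dot3 (cross3 a b) b = 0 := by
  simp only [dot3, cross3, Matrix.cons_val_zero, Matrix.cons_val_one, Matrix.cons_val]; ring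

theorem dot3_cross3_swap : dot3 (cross3 a c) b = -dot3 (cross3 a b) c := by
  simp only [dot3, cross3, Matrix.cons_val_zero, Matrix.cons_val_one, Matrix.cons_val]; ring

end CrossProduct

theorem eq_of_hasDerivWithinAt_zero_Icc {E : Type*} [NormedAddCommGroup E] [NormedSpace ℝ E]
    {f : ℝ → E} {a b : ℝ} (hf : ∀ x ∈ Icc a b, HasDerivWithinAt f 0 (Icc a b) x) :
    ∀ x ∈ Icc a b, f x = f a := fun x hx => by
  simpa [sub_eq_zero] using
    norm_image_sub_le_of_norm_deriv_le_segment' hf (fun _ _ => norm_zero.le) x hx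

section ProductRules

variable {S : Set ℝ} {s : ℝ} {a b : ℝ → Fin 3 → ℝ} {a' b' : Fin 3 → ℝ}

theorem HasDerivWithinAt.dot3 (ha : HasDerivWithinAt a a' S s)
    (hb : HasDerivWithinAt b b' S s) :
    HasDerivWithinAt (fun t => dot3 (a t) (b t)) (dot3 a' (b s) + dot3 (a s) b') S s := by
  have hA := hasDerivWithinAt_pi.1 ha
  have hB := hasDerivWithinAt_pi.1 hb
  exact ((((hA 0).mul (hB 0)).add ((hA 1).mul (hB 1))).add ((hA 2).mul (hB 2))).congr_deriv
    (by simp only [_root_.dot3]; ring)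

theorem HasDerivWithinAt.cross3 (ha : HasDerivWithinAt a a' S s)
    (hb : HasDerivWithinAt b b' S s) :
    HasDerivWithinAt (fun t => cross3 (a t) (b t)) (cross3 a' (b s) + cross3 (a s) b') S s := by
  have hA := hasDerivWithinAt_pi.1 ha
  have hB := hasDerivWithinAt_pi.1 hb
  rw [hasDerivWithinAt_pi]
  intro i
  fin_cases i
  · exact (((hA 1).mul (hB 2)).sub ((hA 2).mul (hB 1))).congr_deriv
      (by simp [_root_.cross3]; ring)
  · exact (((hA 2).mul (hB 0)).sub ((hA 0).mul (hB 2))).congr_deriv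
      (by simp [_root_.cross3]; ring)
  · exact (((hA 0).mul (hB 1)).sub ((hA 1).mul (hB 0))).congr_deriv
      (by simp [_root_.cross3]; ring)

end ProductRules

section FrameSystem

variable {S : Set ℝ} {s q₁ q₂ : ℝ} {v e w : ℝ → Fin 3 → ℝ}

theorem hasDerivWithinAt_frame_column_gram_zero
    (hv : HasDerivWithinAt v (q₁ • e s + q₂ • w s) S s)
    (he : HasDerivWithinAt e (-q₁ • v s) S s) (hw : HasDerivWithinAt w (-q₂ • v s) S s)
    (i j : Fin 3) :
    HasDerivWithinAt (fun t => v t i * v t j + e t i * e t j + w t i * w t j) 0 S s := by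
  have hV := hasDerivWithinAt_pi.1 hv
  have hE := hasDerivWithinAt_pi.1 he
  have hW := hasDerivWithinAt_pi.1 hw
  exact ((((hV i).mul (hV j)).add ((hE i).mul (hE j))).add ((hW i).mul (hW j))).congr_deriv
    (by simp only [Pi.add_apply, Pi.smul_apply, smul_eq_mul]; ring)

theorem hasDerivWithinAt_frame_triple_product_zero
    (hv : HasDerivWithinAt v (q₁ • e s + q₂ • w s) S s)
    (he : HasDerivWithinAt e (-q₁ • v s) S s) (hw : HasDerivWithinAt w (-q₂ • v s) S s) :
    HasDerivWithinAt (fun t => dot3 (cross3 (v t) (e t)) (w t)) 0 S s :=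
  ((hv.cross3 he).dot3 hw).congr_deriv (by simp [dot3, cross3]; ring)

end FrameSystem

def frameMatrix (v e w : Fin 3 → ℝ) : Matrix (Fin 3) (Fin 3) ℝ := Matrix.of ![v, e, w]

section OrthogonalFrame

open Matrix

variable {v e w : Fin 3 → ℝ}

theorem frameMatrix_transpose_mul_self_apply (i j : Fin 3) :
    ((frameMatrix v e w)ᵀ * frameMatrix v e w) i j = v i * v j + e i * e j + w i * w j := by
  simp [frameMatrix, Matrix.mul_apply, Fin.sum_univ_three]

theorem dot3_eq_of_frameMatrix_mem_orthogonalGroup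
    (h : frameMatrix v e w ∈ Matrix.orthogonalGroup (Fin 3) ℝ) :
    dot3 v v = 1 ∧ dot3 e e = 1 ∧ dot3 w w = 1 ∧
      dot3 v e = 0 ∧ dot3 v w = 0 ∧ dot3 e w = 0 := by
  have hrow := fun i j => congrFun (congrFun ((Matrix.mem_orthogonalGroup_iff _ _).1 h) i) j
  simp only [frameMatrix, Matrix.mul_apply, of_apply, cons_val', cons_val_fin_one, transpose_apply,
    Fin.sum_univ_three, Matrix.one_apply] at hrow
  simp only [dot3]
  exact ⟨hrow 0 0, hrow 1 1, hrow 2 2, hrow 0 1, hrow 0 2, hrow 1 2⟩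

theorem eq_dot3_smul_add_of_frameMatrix_mem_orthogonalGroup
    (h : frameMatrix v e w ∈ Matrix.orthogonalGroup (Fin 3) ℝ) (x : Fin 3 → ℝ) :
    x = dot3 x v • v + dot3 x e • e + dot3 x w • w := by
  set F := frameMatrix v e w
  calc x = (Fᵀ * F) *ᵥ x := by rw [(Matrix.mem_orthogonalGroup_iff' _ _).1 h, one_mulVec]
    _ = Fᵀ *ᵥ (F *ᵥ x) := (mulVec_mulVec _ _ _).symm
    _ = dot3 x v • v + dot3 x e • e + dot3 x w • w := by
      ext i
      simp only [F, frameMatrix, mulVec, dotProduct, transpose_apply, of_apply, cons_val',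
        cons_val_fin_one, Fin.sum_univ_three, cons_val_zero, cons_val_one, cons_val, dot3,
        Pi.add_apply, Pi.smul_apply, smul_eq_mul]
      ring

theorem span_eq_top_of_frameMatrix_mem_orthogonalGroup
    (h : frameMatrix v e w ∈ Matrix.orthogonalGroup (Fin 3) ℝ) :
    Submodule.span ℝ {v, e, w} = ⊤ :=
  eq_top_iff.2 fun x _ => Submodule.mem_span_triple.2
    ⟨_, _, _, (eq_dot3_smul_add_of_frameMatrix_mem_orthogonalGroup h x).symm⟩

theorem cross3_eq_of_frameMatrix_mem_orthogonalGroup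
    (h : frameMatrix v e w ∈ Matrix.orthogonalGroup (Fin 3) ℝ)
    (hdet : dot3 (cross3 v e) w = -1) :
    cross3 v e = -w ∧ cross3 v w = e := by
  have hexp := eq_dot3_smul_add_of_frameMatrix_mem_orthogonalGroup h
  constructor
  · rw [hexp (cross3 v e), dot3_cross3_left, dot3_cross3_right, hdet]
    simp
  · rw [hexp (cross3 v w), dot3_cross3_left, dot3_cross3_right, dot3_cross3_swap, hdet]
    simp

end OrthogonalFrame

theorem frame_system_orthonormal_general
    (L : ℝ)
    (q₁ q₂ : ℝ → ℝ) (v e w : ℝ → Fin 3 → ℝ)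
    (hv : ∀ s ∈ Set.Icc (0:ℝ) L,
      HasDerivWithinAt v (q₁ s • e s + q₂ s • w s) (Set.Icc 0 L) s)
    (he : ∀ s ∈ Set.Icc (0:ℝ) L,
      HasDerivWithinAt e (-(q₁ s) • v s) (Set.Icc 0 L) s)
    (hw : ∀ s ∈ Set.Icc (0:ℝ) L,
      HasDerivWithinAt w (-(q₂ s) • v s) (Set.Icc 0 L) s)
    (hv0 : v 0 = ![1, 0, 0]) (he0 : e 0 = ![0, -1, 0]) (hw0 : w 0 = ![0, 0, 1]) :
    ∀ s ∈ Set.Icc (0:ℝ) L,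
      (dot3 (v s) (v s) = 1 ∧ dot3 (e s) (e s) = 1 ∧ dot3 (w s) (w s) = 1 ∧
        dot3 (v s) (e s) = 0 ∧ dot3 (v s) (w s) = 0 ∧ dot3 (e s) (w s) = 0) ∧
      Submodule.span ℝ {v s, e s, w s} = ⊤ ∧
      cross3 (v s) (e s) = -(w s) ∧ cross3 (v s) (w s) = e s := by
  intro s hs
  have horth : frameMatrix (v s) (e s) (w s) ∈ Matrix.orthogonalGroup (Fin 3) ℝ := by
    rw [Matrix.mem_orthogonalGroup_iff']
    ext i j
    rw [frameMatrix_transpose_mul_self_apply, eq_of_hasDerivWithinAt_zero_Icc (fun t ht =>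
      hasDerivWithinAt_frame_column_gram_zero (hv t ht) (he t ht) (hw t ht) i j) s hs,
      hv0, he0, hw0]
    fin_cases i <;> fin_cases j <;> simp
  have hdet : dot3 (cross3 (v s) (e s)) (w s) = -1 := by
    rw [eq_of_hasDerivWithinAt_zero_Icc (fun t ht =>
      hasDerivWithinAt_frame_triple_product_zero (hv t ht) (he t ht) (hw t ht)) s hs,
      hv0, he0, hw0]
    simp [dot3, cross3]
  exact ⟨dot3_eq_of_frameMatrix_mem_orthogonalGroup horth,
    span_eq_top_of_frameMatrix_mem_orthogonalGroup horth,
    cross3_eq_of_frameMatrix_mem_orthogonalGroup horth hdet⟩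

/-- the frame ODE system with orthonormal initial data produces an
orthonormal (hence basis) frame with the stated cross-product relations. -/
theorem frame_system_orthonormal
    (L : ℝ) (hL : 0 < L)
    (q₁ q₂ : ℝ → ℝ) (v e w : ℝ → Fin 3 → ℝ)
    (hq₁ : ContinuousOn q₁ (Set.Icc 0 L)) (hq₂ : ContinuousOn q₂ (Set.Icc 0 L))
    (hv : ∀ s ∈ Set.Icc (0:ℝ) L,
      HasDerivWithinAt v (q₁ s • e s + q₂ s • w s) (Set.Icc 0 L) s)
    (he : ∀ s ∈ Set.Icc (0:ℝ) L,
      HasDerivWithinAt e (-(q₁ s) • v s) (Set.Icc 0 L) s)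
    (hw : ∀ s ∈ Set.Icc (0:ℝ) L,
      HasDerivWithinAt w (-(q₂ s) • v s) (Set.Icc 0 L) s)
    (hv0 : v 0 = ![1, 0, 0]) (he0 : e 0 = ![0, -1, 0]) (hw0 : w 0 = ![0, 0, 1]) :
    ∀ s ∈ Set.Icc (0:ℝ) L,
      (dot3 (v s) (v s) = 1 ∧ dot3 (e s) (e s) = 1 ∧ dot3 (w s) (w s) = 1 ∧
        dot3 (v s) (e s) = 0 ∧ dot3 (v s) (w s) = 0 ∧ dot3 (e s) (w s) = 0) ∧
      Submodule.span ℝ {v s, e s, w s} = ⊤ ∧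
      cross3 (v s) (e s) = -(w s) ∧ cross3 (v s) (w s) = e s :=
  frame_system_orthonormal_general L q₁ q₂ v e w hv he hw hv0 he0 hw0
end
end

section
/- Under the hypotheses of the frame identity (q₁, q₂ : [0, L] → ℝ of class C¹; v, e, w : [0, L] → ℝ³ of class C² with {v, e, w} orthonormal, v × e = −w, v × w = e, and vₛ = q₁ e + q₂ w, eₛ = −q₁ v, wₛ = −q₂ v), for each endpoint s₀ ∈ {0, L} the following equivalence holds: v(s₀) × vₛₛ(s₀) = 0 if and only if q₁ₛ(s₀) = q₂ₛ(s₀) = 0. In particular, if q = q₁ + i q₂ satisfies the Neumann conditions qₛ(0) = qₛ(L) = 0, then v satisfies the first-order compatibility condition v × vₛₛ = 0 at both endpoints. -/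
open Real MeasureTheory Set

noncomputable section

/-! Differentiating `vₛ = q₁ e + q₂ w` with the frame equations gives
`vₛₛ = -(q₁² + q₂²) v + q₁ₛ e + q₂ₛ w`, hence `v × vₛₛ = q₂ₛ e - q₁ₛ w`, which vanishes exactly
when `q₁ₛ = q₂ₛ = 0` because `e` and `w` are orthonormal. At the endpoints the derivatives are
one-sided, and uniqueness of derivatives within `[0, L]` makes this computation determine `vₛₛ`. -/

open Matrix

theorem dot3_eq_dotProduct (a b : Fin 3 → ℝ) : dot3 a b = a ⬝ᵥ b := by
  simp [dot3, dotProduct, Fin.sum_univ_three]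

theorem cross3_eq_crossProduct (a b : Fin 3 → ℝ) : cross3 a b = a ⨯₃ b := by
  simp [cross3, cross_apply]

theorem eq_zero_of_smul_add_smul_eq_zero_of_orthonormal {n : Type*} [Fintype n]
    {e w : n → ℝ} {a b : ℝ} (he : e ⬝ᵥ e = 1) (hw : w ⬝ᵥ w = 1) (hew : e ⬝ᵥ w = 0)
    (h : a • e + b • w = 0) : a = 0 ∧ b = 0 := by
  have hwe : w ⬝ᵥ e = 0 := by rw [dotProduct_comm, hew]
  constructor
  · have h' := congrArg (e ⬝ᵥ ·) h
    simp only [dotProduct_add, dotProduct_smul, he, hew, dotProduct_zero, smul_eq_mul] at h'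
    linarith
  · have h' := congrArg (w ⬝ᵥ ·) h
    simp only [dotProduct_add, dotProduct_smul, hw, hwe, dotProduct_zero, smul_eq_mul] at h'
    linarith

theorem cross3_smul_add_smul_add_smul_eq_zero_iff {v e w : Fin 3 → ℝ} (c a b : ℝ)
    (he : dot3 e e = 1) (hw : dot3 w w = 1) (hew : dot3 e w = 0)
    (hve : cross3 v e = -w) (hvw : cross3 v w = e) :
    cross3 v (c • v + a • e + b • w) = 0 ↔ a = 0 ∧ b = 0 := by
  rw [dot3_eq_dotProduct] at he hw hew
  rw [cross3_eq_crossProduct] at hve hvw ⊢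
  have hcross : v ⨯₃ (c • v + a • e + b • w) = b • e + (-a) • w := by
    simp only [map_add, map_smul, cross_self, hve, hvw]
    module
  rw [hcross]
  refine ⟨fun h => ?_, fun ⟨ha, hb⟩ => by simp [ha, hb]⟩
  obtain ⟨hb, ha⟩ := eq_zero_of_smul_add_smul_eq_zero_of_orthonormal he hw hew h
  exact ⟨neg_eq_zero.mp ha, hb⟩

theorem eq_of_hasDerivWithinAt_frame_combination
    {E : Type*} [NormedAddCommGroup E] [NormedSpace ℝ E]
    {S : Set ℝ} {t : ℝ} {q₁ q₂ : ℝ → ℝ} {v v' e w : ℝ → E} {a b : ℝ} {x : E}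
    (hS : UniqueDiffWithinAt ℝ S t) (ht : t ∈ S)
    (hq₁ : HasDerivWithinAt q₁ a S t) (hq₂ : HasDerivWithinAt q₂ b S t)
    (he : HasDerivWithinAt e (-(q₁ t) • v t) S t) (hw : HasDerivWithinAt w (-(q₂ t) • v t) S t)
    (hvs : ∀ s ∈ S, v' s = q₁ s • e s + q₂ s • w s) (hv' : HasDerivWithinAt v' x S t) :
    x = -(q₁ t ^ 2 + q₂ t ^ 2) • v t + a • e t + b • w t := by
  have hframe := ((hq₁.smul he).add (hq₂.smul hw)).congr hvs (hvs t ht)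
  rw [hS.eq_deriv S hv' hframe]
  module

theorem endpoint_compatibility_iff_neumann_general
    (L : ℝ) (hL : 0 < L)
    (q₁ q₂ q₁' q₂' : ℝ → ℝ) (v v' v'' e w : ℝ → Fin 3 → ℝ)
    (hq₁ : ∀ s ∈ Set.Icc (0:ℝ) L, HasDerivWithinAt q₁ (q₁' s) (Set.Icc 0 L) s)
    (hq₂ : ∀ s ∈ Set.Icc (0:ℝ) L, HasDerivWithinAt q₂ (q₂' s) (Set.Icc 0 L) s)
    (horth : ∀ s ∈ Set.Icc (0:ℝ) L,
      dot3 (v s) (v s) = 1 ∧ dot3 (e s) (e s) = 1 ∧ dot3 (w s) (w s) = 1 ∧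
      dot3 (v s) (e s) = 0 ∧ dot3 (v s) (w s) = 0 ∧ dot3 (e s) (w s) = 0)
    (hcross1 : ∀ s ∈ Set.Icc (0:ℝ) L, cross3 (v s) (e s) = -(w s))
    (hcross2 : ∀ s ∈ Set.Icc (0:ℝ) L, cross3 (v s) (w s) = e s)
    (hv' : ∀ s ∈ Set.Icc (0:ℝ) L, HasDerivWithinAt v' (v'' s) (Set.Icc 0 L) s)
    (hvs : ∀ s ∈ Set.Icc (0:ℝ) L, v' s = q₁ s • e s + q₂ s • w s)
    (hes : ∀ s ∈ Set.Icc (0:ℝ) L,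
      HasDerivWithinAt e (-(q₁ s) • v s) (Set.Icc 0 L) s)
    (hws : ∀ s ∈ Set.Icc (0:ℝ) L,
      HasDerivWithinAt w (-(q₂ s) • v s) (Set.Icc 0 L) s) :
    (∀ s₀ ∈ ({0, L} : Set ℝ),
      (cross3 (v s₀) (v'' s₀) = 0 ↔ (q₁' s₀ = 0 ∧ q₂' s₀ = 0))) ∧
    ((q₁' 0 = 0 ∧ q₂' 0 = 0 ∧ q₁' L = 0 ∧ q₂' L = 0) →
      cross3 (v 0) (v'' 0) = 0 ∧ cross3 (v L) (v'' L) = 0) := by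
  have key : ∀ s₀ ∈ Set.Icc (0:ℝ) L,
      cross3 (v s₀) (v'' s₀) = 0 ↔ q₁' s₀ = 0 ∧ q₂' s₀ = 0 := fun s₀ hs₀ => by
    obtain ⟨-, hee, hww, -, -, hew⟩ := horth s₀ hs₀
    rw [eq_of_hasDerivWithinAt_frame_combination (uniqueDiffOn_Icc hL s₀ hs₀) hs₀ (hq₁ s₀ hs₀)
      (hq₂ s₀ hs₀) (hes s₀ hs₀) (hws s₀ hs₀) hvs (hv' s₀ hs₀)]
    exact cross3_smul_add_smul_add_smul_eq_zero_iff _ _ _ hee hww hew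
      (hcross1 s₀ hs₀) (hcross2 s₀ hs₀)
  have h0 : (0:ℝ) ∈ Set.Icc 0 L := left_mem_Icc.mpr hL.le
  have hL' : L ∈ Set.Icc 0 L := right_mem_Icc.mpr hL.le
  refine ⟨?_, fun ⟨h₁0, h₂0, h₁L, h₂L⟩ =>
    ⟨(key 0 h0).mpr ⟨h₁0, h₂0⟩, (key L hL').mpr ⟨h₁L, h₂L⟩⟩⟩
  rintro s₀ (rfl | rfl)
  exacts [key _ h0, key _ hL']

/-- at each endpoint, `v × vₛₛ = 0` iff `q₁ₛ = q₂ₛ = 0` there; in particular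
Neumann conditions for `q = q₁ + i q₂` give the first-order compatibility condition for `v`. -/
theorem endpoint_compatibility_iff_neumann
    (L : ℝ) (hL : 0 < L)
    (q₁ q₂ q₁' q₂' : ℝ → ℝ) (v v' v'' e w : ℝ → Fin 3 → ℝ)
    (hq₁ : ∀ s ∈ Set.Icc (0:ℝ) L, HasDerivWithinAt q₁ (q₁' s) (Set.Icc 0 L) s)
    (hq₂ : ∀ s ∈ Set.Icc (0:ℝ) L, HasDerivWithinAt q₂ (q₂' s) (Set.Icc 0 L) s)
    (hq₁'c : ContinuousOn q₁' (Set.Icc 0 L)) (hq₂'c : ContinuousOn q₂' (Set.Icc 0 L))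
    (horth : ∀ s ∈ Set.Icc (0:ℝ) L,
      dot3 (v s) (v s) = 1 ∧ dot3 (e s) (e s) = 1 ∧ dot3 (w s) (w s) = 1 ∧
      dot3 (v s) (e s) = 0 ∧ dot3 (v s) (w s) = 0 ∧ dot3 (e s) (w s) = 0)
    (hbasis : ∀ s ∈ Set.Icc (0:ℝ) L, Submodule.span ℝ {v s, e s, w s} = ⊤)
    (hcross1 : ∀ s ∈ Set.Icc (0:ℝ) L, cross3 (v s) (e s) = -(w s))
    (hcross2 : ∀ s ∈ Set.Icc (0:ℝ) L, cross3 (v s) (w s) = e s)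
    (hv : ∀ s ∈ Set.Icc (0:ℝ) L, HasDerivWithinAt v (v' s) (Set.Icc 0 L) s)
    (hv' : ∀ s ∈ Set.Icc (0:ℝ) L, HasDerivWithinAt v' (v'' s) (Set.Icc 0 L) s)
    (hv''c : ContinuousOn v'' (Set.Icc 0 L))
    (hvs : ∀ s ∈ Set.Icc (0:ℝ) L, v' s = q₁ s • e s + q₂ s • w s)
    (hes : ∀ s ∈ Set.Icc (0:ℝ) L,
      HasDerivWithinAt e (-(q₁ s) • v s) (Set.Icc 0 L) s)
    (hws : ∀ s ∈ Set.Icc (0:ℝ) L,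
      HasDerivWithinAt w (-(q₂ s) • v s) (Set.Icc 0 L) s) :
    (∀ s₀ ∈ ({0, L} : Set ℝ),
      (cross3 (v s₀) (v'' s₀) = 0 ↔ (q₁' s₀ = 0 ∧ q₂' s₀ = 0))) ∧
    ((q₁' 0 = 0 ∧ q₂' 0 = 0 ∧ q₁' L = 0 ∧ q₂' L = 0) →
      cross3 (v 0) (v'' 0) = 0 ∧ cross3 (v L) (v'' L) = 0) :=
  endpoint_compatibility_iff_neumann_general L hL q₁ q₂ q₁' q₂' v v' v'' e w hq₁ hq₂ horth hcross1
    hcross2 hv' hvs hes hws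
end
end

section
/- Let L > 0, R > L/π, and v^R(s) = (cos(s/R), −sin(s/R), 0). Suppose φ : [0, L] × [0, ∞) → ℝ³ is smooth and satisfies φ_t = φ × φₛₛ + φ × v^R_{ss} + v^R × φₛₛ on [0, L] × [0, ∞) with φ(0, t) = φ(L, t) = 0 for all t ≥ 0. Then there exists a constant C > 0, depending only on L and R, such that ‖φ(t)‖₁ ≤ C ‖φ(·, 0)‖₁ for all t ≥ 0. -/
open Real MeasureTheory Set

noncomputable section

open intervalIntegral
section AuxLemmas
namespace Aux

lemma dot3_nonneg (a : Fin 3 → ℝ) : 0 ≤ dot3 a a := by unfold dot3; nlinarith [mul_self_nonneg (a 0), mul_self_nonneg (a 1), mul_self_nonneg (a 2)]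

lemma dot3_comm (a b : Fin 3 → ℝ) : dot3 a b = dot3 b a := by unfold dot3; ring

lemma dot3_add_right (a x y : Fin 3 → ℝ) : dot3 a (x + y) = dot3 a x + dot3 a y := by
  simp [dot3, Pi.add_apply]; ring

lemma dot3_zero (a : Fin 3 → ℝ) : dot3 a 0 = 0 := by simp [dot3]

lemma cross3_apply0 (a b : Fin 3 → ℝ) : cross3 a b 0 = a 1 * b 2 - a 2 * b 1 := rfl
lemma cross3_apply1 (a b : Fin 3 → ℝ) : cross3 a b 1 = a 2 * b 0 - a 0 * b 2 := rfl
lemma cross3_apply2 (a b : Fin 3 → ℝ) : cross3 a b 2 = a 0 * b 1 - a 1 * b 0 := rfl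

lemma dot3_cross_self (a b : Fin 3 → ℝ) : dot3 b (cross3 a b) = 0 := by
  simp [dot3, cross3_apply0, cross3_apply1, cross3_apply2]; ring

lemma dot3_cross_self' (a b : Fin 3 → ℝ) : dot3 a (cross3 a b) = 0 := by
  simp [dot3, cross3_apply0, cross3_apply1, cross3_apply2]; ring

lemma triple_cyclic (a b c : Fin 3 → ℝ) : dot3 a (cross3 b c) = dot3 c (cross3 a b) := by
  simp [dot3, cross3_apply0, cross3_apply1, cross3_apply2]; ring

lemma triple_rot (a b c : Fin 3 → ℝ) : dot3 a (cross3 b c) = dot3 b (cross3 c a) := by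
  simp [dot3, cross3_apply0, cross3_apply1, cross3_apply2]; ring

lemma norm3_sq (a : Fin 3 → ℝ) : norm3 a ^ 2 = dot3 a a := Real.sq_sqrt (dot3_nonneg a)

lemma dot3_cross_smul (w u v : Fin 3 → ℝ) (c : ℝ) :
    dot3 w (cross3 u (fun i => c * v i)) = c * dot3 w (cross3 u v) := by
  simp only [dot3, cross3_apply0, cross3_apply1, cross3_apply2]; ring

lemma Continuous.dot3'' {α} [TopologicalSpace α] {f g : α → Fin 3 → ℝ}
    (hf : Continuous f) (hg : Continuous g) : Continuous (fun x => dot3 (f x) (g x)) := by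
  have hfi : ∀ i, Continuous (fun x => f x i) := fun i => (continuous_apply i).comp hf
  have hgi : ∀ i, Continuous (fun x => g x i) := fun i => (continuous_apply i).comp hg
  exact (((hfi 0).mul (hgi 0)).add ((hfi 1).mul (hgi 1))).add ((hfi 2).mul (hgi 2))

lemma HasDerivAt.dot3' {f g : ℝ → Fin 3 → ℝ} {f' g' : Fin 3 → ℝ} {x : ℝ}
    (hf : HasDerivAt f f' x) (hg : HasDerivAt g g' x) :
    HasDerivAt (fun x => dot3 (f x) (g x)) (dot3 f' (g x) + dot3 (f x) g') x := by
  have hfi := hasDerivAt_pi.1 hf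
  have hgi := hasDerivAt_pi.1 hg
  have h := (((hfi 0).mul (hgi 0)).add ((hfi 1).mul (hgi 1))).add ((hfi 2).mul (hgi 2))
  refine h.congr_deriv ?_
  unfold dot3; ring

section twovar
variable {g : ℝ × ℝ → Fin 3 → ℝ}

lemma hasDerivAt_fst (hg : ContDiff ℝ (⊤ : ℕ∞) g) (s t : ℝ) :
    HasDerivAt (fun s' => g (s', t)) (fderiv ℝ g (s, t) (1, 0)) s := by
  have h1 : HasFDerivAt g (fderiv ℝ g (s, t)) (s, t) :=
    (hg.differentiable (by simp) (s, t)).hasFDerivAt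
  have h2 : HasDerivAt (fun s' : ℝ => ((s' : ℝ), t)) ((1 : ℝ), (0 : ℝ)) s := by
    simpa using (hasDerivAt_id s).prodMk (hasDerivAt_const s t)
  exact h1.comp_hasDerivAt s h2

lemma hasDerivAt_snd (hg : ContDiff ℝ (⊤ : ℕ∞) g) (s t : ℝ) :
    HasDerivAt (fun t' => g (s, t')) (fderiv ℝ g (s, t) (0, 1)) t := by
  have h1 : HasFDerivAt g (fderiv ℝ g (s, t)) (s, t) :=
    (hg.differentiable (by simp) (s, t)).hasFDerivAt
  have h2 : HasDerivAt (fun t' : ℝ => ((s : ℝ), t')) ((0 : ℝ), (1 : ℝ)) t := by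
    simpa using (hasDerivAt_const t s).prodMk (hasDerivAt_id t)
  exact h1.comp_hasDerivAt t h2

lemma contDiff_fderiv_apply (hg : ContDiff ℝ (⊤ : ℕ∞) g) (v : ℝ × ℝ) :
    ContDiff ℝ (⊤ : ℕ∞) (fun p => fderiv ℝ g p v) :=
  (hg.fderiv_right (le_refl _)).clm_apply contDiff_const

lemma fderiv_swap (hg : ContDiff ℝ (⊤ : ℕ∞) g) (p : ℝ × ℝ) (v w : ℝ × ℝ) :
    fderiv ℝ (fun q => fderiv ℝ g q v) p w = fderiv ℝ (fun q => fderiv ℝ g q w) p v := by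
  have hd : ∀ y, HasFDerivAt g (fderiv ℝ g y) y := fun y =>
    (hg.differentiable (by simp) y).hasFDerivAt
  have hf' : ContDiff ℝ (⊤ : ℕ∞) (fderiv ℝ g) := hg.fderiv_right (le_refl _)
  have hx : HasFDerivAt (fderiv ℝ g) (fderiv ℝ (fderiv ℝ g) p) p :=
    (hf'.differentiable (by simp) p).hasFDerivAt
  have key : ∀ v w : ℝ × ℝ, fderiv ℝ (fun q => fderiv ℝ g q v) p w
      = fderiv ℝ (fderiv ℝ g) p w v := by
    intro v w
    have h : HasFDerivAt (fun q => fderiv ℝ g q v)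
        ((ContinuousLinearMap.apply ℝ (Fin 3 → ℝ) v).comp (fderiv ℝ (fderiv ℝ g) p)) p :=
      ((ContinuousLinearMap.apply ℝ (Fin 3 → ℝ) v).hasFDerivAt).comp p hx
    rw [h.fderiv]; rfl
  rw [key, key]
  exact second_derivative_symmetric hd hx w v

end twovar
end Aux

lemma poincare_scalar {L : ℝ} (hL : 0 < L) {u u' : ℝ → ℝ}
    (hu : ∀ s, HasDerivAt u (u' s) s) (hu'c : Continuous u')
    (h0 : u 0 = 0) (hL0 : u L = 0) :
    ∫ s in (0:ℝ)..L, u s ^ 2 ≤ (L / π) ^ 2 * ∫ s in (0:ℝ)..L, u' s ^ 2 := by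
  have huc : Continuous u := by
    rw [continuous_iff_continuousAt]; exact fun s => (hu s).continuousAt
  have hπ : (0:ℝ) < π := Real.pi_pos
  set k : ℝ := π / L with hk_def
  have hk : 0 < k := div_pos hπ hL
  -- bound on u'
  obtain ⟨K, hK⟩ := (isCompact_Icc (a := (0:ℝ)) (b := L)).exists_bound_of_continuousOn
    hu'c.continuousOn
  have hK0 : 0 ≤ K := le_trans (norm_nonneg _) (hK 0 ⟨le_rfl, hL.le⟩)
  -- |u x| ≤ K * x  and |u x| ≤ K * (L - x) on [0, L]
  have hub1 : ∀ x ∈ Icc (0:ℝ) L, |u x| ≤ K * x := by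
    intro x hx
    have hint : ∫ s in (0:ℝ)..x, u' s = u x - u 0 :=
      integral_eq_sub_of_hasDerivAt (fun s _ => hu s) (hu'c.intervalIntegrable 0 x)
    have hb : ∀ s ∈ Set.uIoc (0:ℝ) x, ‖u' s‖ ≤ K := by
      intro s hs
      rw [Set.uIoc_of_le hx.1] at hs
      exact hK s ⟨hs.1.le, hs.2.trans hx.2⟩
    have := intervalIntegral.norm_integral_le_of_norm_le_const hb
    rw [hint] at this
    simpa [h0, abs_of_nonneg hx.1] using this
  have hub2 : ∀ x ∈ Icc (0:ℝ) L, |u x| ≤ K * (L - x) := by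
    intro x hx
    have hint : ∫ s in x..L, u' s = u L - u x :=
      integral_eq_sub_of_hasDerivAt (fun s _ => hu s) (hu'c.intervalIntegrable x L)
    have hb : ∀ s ∈ Set.uIoc x L, ‖u' s‖ ≤ K := by
      intro s hs
      rw [Set.uIoc_of_le hx.2] at hs
      exact hK s ⟨hx.1.trans hs.1.le, hs.2⟩
    have := intervalIntegral.norm_integral_le_of_norm_le_const hb
    rw [hint, hL0] at this
    have h2 : |u x| ≤ K * |L - x| := by
      have e : ‖(0:ℝ) - u x‖ = |u x| := by simp
      rw [e] at this; exact this
    rwa [abs_of_nonneg (sub_nonneg.2 hx.2)] at h2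
  -- auxiliary cotangent-type function
  set c : ℝ → ℝ := fun s => k * (Real.cos (k * s) / Real.sin (k * s)) with hc_def
  set c' : ℝ → ℝ := fun s => -(k^2) / Real.sin (k * s) ^ 2 with hc'_def
  have hsin : ∀ s ∈ Ioo (0:ℝ) L, 0 < Real.sin (k * s) := by
    intro s hs
    apply Real.sin_pos_of_pos_of_lt_pi (mul_pos hk hs.1)
    have : k * s < k * L := by exact (mul_lt_mul_iff_right₀ hk).2 hs.2
    rw [hk_def] at this
    calc k * s < π / L * L := by rw [hk_def]; exact (mul_lt_mul_iff_right₀ hk).2 hs.2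
    _ = π := by field_simp
  have hcder : ∀ s ∈ Ioo (0:ℝ) L, HasDerivAt c (c' s) s := by
    intro s hs
    have hS := hsin s hs
    have hlin : HasDerivAt (fun x : ℝ => k * x) (k * 1) s := (hasDerivAt_id s).const_mul k
    have hcos : HasDerivAt (fun x => Real.cos (k * x)) (-Real.sin (k*s) * (k*1)) s :=
      (Real.hasDerivAt_cos (k*s)).comp s hlin
    have hsin' : HasDerivAt (fun x => Real.sin (k * x)) (Real.cos (k*s) * (k*1)) s :=
      (Real.hasDerivAt_sin (k*s)).comp s hlin
    have hdiv := (hcos.div hsin' hS.ne').const_mul k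
    have hpy := Real.sin_sq_add_cos_sq (k*s)
    refine hdiv.congr_deriv (Eq.symm ?_)
    rw [hc'_def]
    simp only
    have hnum : -Real.sin (k*s) * (k*1) * Real.sin (k*s)
        - Real.cos (k*s) * (Real.cos (k*s) * (k*1)) = -k := by
      linear_combination (-k) * hpy
    rw [hnum]
    field_simp
  -- pointwise inequality
  set B : ℝ → ℝ := fun s => u s ^ 2 * c s with hB_def
  set B' : ℝ → ℝ := fun s => 2 * u s * u' s * c s + u s ^ 2 * c' s with hB'_def
  have hBder : ∀ s ∈ Ioo (0:ℝ) L, HasDerivAt B (B' s) s := by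
    intro s hs
    have h1 : HasDerivAt (fun x => u x ^ 2) (2 * u s * u' s) s := by
      have := (hu s).pow 2
      refine this.congr_deriv ?_; ring
    exact h1.mul (hcder s hs)
  have hpt : ∀ s ∈ Ioo (0:ℝ) L, B' s + k^2 * u s ^ 2 ≤ u' s ^ 2 := by
    intro s hs
    have hS := hsin s hs
    have hS2 : (0:ℝ) < Real.sin (k*s) ^ 2 := by positivity
    have hpy := Real.sin_sq_add_cos_sq (k*s)
    have hcsq : c s ^ 2 + c' s + k^2 = 0 := by
      rw [hc_def, hc'_def]
      simp only
      field_simp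
      linear_combination k^2 * hpy
    have hexp : B' s + k^2 * u s ^ 2
        = u' s ^ 2 - (u' s - c s * u s)^2 + u s ^ 2 * (c s ^ 2 + c' s + k^2) := by
      rw [hB'_def]; ring
    rw [hexp, hcsq]
    nlinarith [sq_nonneg (u' s - c s * u s)]
  -- main estimate for each small ε
  have hmain : ∀ ε ∈ Ioo (0:ℝ) (L/2),
      k^2 * ∫ s in ε..(L-ε), u s ^ 2 ≤ (∫ s in (0:ℝ)..L, u' s ^ 2) + π * K^2 * ε := by
    intro ε hε
    have hε0 := hε.1
    have hεL : ε ≤ L - ε := by linarith [hε.2]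
    have hsub : Icc ε (L-ε) ⊆ Ioo 0 L := fun x hx =>
      ⟨lt_of_lt_of_le hε.1 hx.1, by linarith [hx.2, hε.1]⟩
    have hclin : Continuous (fun x : ℝ => k * x) := continuous_const.mul continuous_id
    have hcc : ContinuousOn c (Icc ε (L-ε)) := by
      apply continuousOn_const.mul
      apply ContinuousOn.div
      · exact (Real.continuous_cos.comp hclin).continuousOn
      · exact (Real.continuous_sin.comp hclin).continuousOn
      · intro x hx; exact (hsin x (hsub hx)).ne'
    have hc'c : ContinuousOn c' (Icc ε (L-ε)) := by
      apply continuousOn_const.div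
      · exact ((Real.continuous_sin.comp hclin).pow 2).continuousOn
      · intro x hx; exact pow_ne_zero 2 (hsin x (hsub hx)).ne'
    have huon : ContinuousOn u (Icc ε (L-ε)) := huc.continuousOn
    have hB'c : ContinuousOn B' (Icc ε (L-ε)) := by
      apply ContinuousOn.add
      · exact (((continuousOn_const.mul huon).mul hu'c.continuousOn).mul hcc)
      · exact (huon.pow 2).mul hc'c
    have hiB : IntervalIntegrable B' volume ε (L-ε) := by
      apply ContinuousOn.intervalIntegrable
      rwa [Set.uIcc_of_le hεL]
    have hi1 : IntervalIntegrable (fun s => u' s ^ 2) volume ε (L-ε) :=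
      (hu'c.pow 2).intervalIntegrable _ _
    have hi2 : IntervalIntegrable (fun s => u s ^ 2) volume ε (L-ε) :=
      (huc.pow 2).intervalIntegrable _ _
    have hftc : ∫ s in ε..(L-ε), B' s = B (L-ε) - B ε := by
      apply integral_eq_sub_of_hasDerivAt
      · intro x hx
        rw [Set.uIcc_of_le hεL] at hx
        exact hBder x (hsub hx)
      · exact hiB
    have hnn : 0 ≤ ∫ s in ε..(L-ε), (u' s ^ 2 - (B' s + k^2 * u s ^ 2)) := by
      apply intervalIntegral.integral_nonneg hεL
      intro x hx
      have := hpt x (hsub hx)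
      linarith
    have hsplit : ∫ s in ε..(L-ε), (u' s ^ 2 - (B' s + k^2 * u s ^ 2))
        = (∫ s in ε..(L-ε), u' s ^ 2) - ((B (L-ε) - B ε) + k^2 * ∫ s in ε..(L-ε), u s ^ 2) := by
      rw [intervalIntegral.integral_sub hi1 (hiB.add (hi2.const_mul (k^2)))]
      rw [intervalIntegral.integral_add hiB (hi2.const_mul (k^2))]
      rw [intervalIntegral.integral_const_mul, hftc]
    -- boundary bounds
    have hKε : 0 ≤ K * ε := by positivity
    have hkε2 : k * ε ≤ π / 2 := by
      rw [hk_def]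
      rw [div_mul_eq_mul_div, div_le_div_iff₀ hL (by norm_num : (0:ℝ) < 2)]
      nlinarith [hε.2, hπ]
    have hsε : 2/π * (k*ε) ≤ Real.sin (k*ε) := Real.mul_le_sin (by positivity) hkε2
    have hsε0 : (0:ℝ) < 2/π * (k*ε) := by positivity
    have hboundB : ∀ x, |u x| ≤ K * ε → Real.sin (k * x) = Real.sin (k * ε) →
        |B x| ≤ π / 2 * K^2 * ε := by
      intro x hux hsx
      have hsinx : 0 < Real.sin (k * x) := by rw [hsx]; linarith
      have e1 : |B x| = u x ^ 2 * (k * (|Real.cos (k*x)| / Real.sin (k*x))) := by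
        rw [hB_def, hc_def]
        simp only
        rw [abs_mul, abs_of_nonneg (sq_nonneg (u x)), abs_mul, abs_of_pos hk, abs_div,
          abs_of_pos hsinx]
      have e2 : u x ^ 2 ≤ (K * ε)^2 := by
        rw [← sq_abs]
        exact pow_le_pow_left₀ (abs_nonneg _) hux 2
      have e3 : |Real.cos (k*x)| / Real.sin (k*x) ≤ 1 / (2/π * (k*ε)) := by
        rw [hsx]
        exact div_le_div₀ (by norm_num) (Real.abs_cos_le_one _) hsε0 hsε
      have e4 : u x ^ 2 * (k * (|Real.cos (k*x)| / Real.sin (k*x)))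
          ≤ (K * ε)^2 * (k * (1 / (2/π * (k*ε)))) := by
        apply mul_le_mul e2 _ (by positivity) (by positivity)
        exact mul_le_mul_of_nonneg_left e3 hk.le
      have e5 : (K * ε)^2 * (k * (1 / (2/π * (k*ε)))) = π / 2 * K^2 * ε := by
        field_simp
      rw [e1]; rw [e5] at e4; exact e4
    have hBe : |B ε| ≤ π / 2 * K^2 * ε := by
      apply hboundB ε _ rfl
      have := hub1 ε ⟨hε0.le, by linarith [hε.2]⟩
      linarith [this]
    have hBe' : |B (L-ε)| ≤ π / 2 * K^2 * ε := by
      have hkLε : k * (L - ε) = π - k * ε := by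
        rw [hk_def]; field_simp
      apply hboundB (L-ε)
      · have := hub2 (L-ε) ⟨by linarith [hε.2], by linarith [hε0]⟩
        simpa using this
      · rw [hkLε, Real.sin_pi_sub]
    have hmono : ∫ s in ε..(L-ε), u' s ^ 2 ≤ ∫ s in (0:ℝ)..L, u' s ^ 2 := by
      apply intervalIntegral.integral_mono_interval hε0.le hεL (by linarith [hε0])
      · exact Filter.Eventually.of_forall (fun x => sq_nonneg _)
      · exact (hu'c.pow 2).intervalIntegrable _ _
    have habs1 : B ε ≤ π / 2 * K^2 * ε := le_trans (le_abs_self _) hBe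
    have habs2 : -(π / 2 * K^2 * ε) ≤ B (L-ε) := by
      have := neg_abs_le (B (L-ε)); linarith [hBe']
    rw [hsplit] at hnn
    linarith
  -- pass to the limit ε → 0⁺
  have hIcont : Continuous (fun x => ∫ s in (0:ℝ)..x, u s ^ 2) :=
    intervalIntegral.continuous_primitive (fun a b => (huc.pow 2).intervalIntegrable a b) 0
  have hsplitI : ∀ ε : ℝ, ∫ s in ε..(L-ε), u s ^ 2
      = (∫ s in (0:ℝ)..(L-ε), u s ^ 2) - ∫ s in (0:ℝ)..ε, u s ^ 2 := by
    intro ε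
    rw [← intervalIntegral.integral_add_adjacent_intervals (f := fun s => u s ^ 2) (a := (0:ℝ)) (b := ε) (c := L-ε)
      ((huc.pow 2).intervalIntegrable _ _) ((huc.pow 2).intervalIntegrable _ _)]
    ring
  have ht1 : Filter.Tendsto (fun ε : ℝ => k^2 * ∫ s in ε..(L-ε), u s ^ 2)
      (nhdsWithin 0 (Ioi 0)) (nhds (k^2 * ∫ s in (0:ℝ)..L, u s ^ 2)) := by
    have hco : Continuous (fun ε : ℝ => k^2 * ((∫ s in (0:ℝ)..(L-ε), u s ^ 2)
        - ∫ s in (0:ℝ)..ε, u s ^ 2)) := by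
      apply continuous_const.mul
      exact (hIcont.comp (continuous_const.sub continuous_id)).sub hIcont
    have h0' : k^2 * ((∫ s in (0:ℝ)..(L-(0:ℝ)), u s ^ 2) - ∫ s in (0:ℝ)..(0:ℝ), u s ^ 2)
        = k^2 * ∫ s in (0:ℝ)..L, u s ^ 2 := by simp
    have : Filter.Tendsto (fun ε : ℝ => k^2 * ((∫ s in (0:ℝ)..(L-ε), u s ^ 2)
        - ∫ s in (0:ℝ)..ε, u s ^ 2)) (nhdsWithin 0 (Ioi 0))
        (nhds (k^2 * ((∫ s in (0:ℝ)..(L-(0:ℝ)), u s ^ 2) - ∫ s in (0:ℝ)..(0:ℝ), u s ^ 2))) :=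
      (hco.tendsto 0).mono_left nhdsWithin_le_nhds
    rw [h0'] at this
    apply this.congr
    intro ε
    rw [hsplitI ε]
  have ht2 : Filter.Tendsto (fun ε : ℝ => (∫ s in (0:ℝ)..L, u' s ^ 2) + π * K^2 * ε)
      (nhdsWithin 0 (Ioi 0)) (nhds ((∫ s in (0:ℝ)..L, u' s ^ 2) + π * K^2 * 0)) :=
    ((continuous_const.add (continuous_const.mul continuous_id)).tendsto 0).mono_left
      nhdsWithin_le_nhds
  have hev : ∀ᶠ ε in nhdsWithin (0:ℝ) (Ioi 0),
      k^2 * (∫ s in ε..(L-ε), u s ^ 2) ≤ (∫ s in (0:ℝ)..L, u' s ^ 2) + π * K^2 * ε := by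
    filter_upwards [Ioo_mem_nhdsGT_of_mem (⟨le_rfl, by linarith⟩ : (0:ℝ) ∈ Ico (0:ℝ) (L/2))]
      with ε hε
    exact hmain ε hε
  have hfin : k^2 * (∫ s in (0:ℝ)..L, u s ^ 2)
      ≤ (∫ s in (0:ℝ)..L, u' s ^ 2) + π * K^2 * 0 :=
    le_of_tendsto_of_tendsto ht1 ht2 hev
  have hk2 : (L / π)^2 * k^2 = 1 := by
    rw [hk_def]; field_simp
  have h := mul_le_mul_of_nonneg_left hfin (sq_nonneg (L/π))
  calc ∫ s in (0:ℝ)..L, u s ^ 2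
      = (L/π)^2 * k^2 * ∫ s in (0:ℝ)..L, u s ^ 2 := by rw [hk2]; ring
    _ = (L/π)^2 * (k^2 * ∫ s in (0:ℝ)..L, u s ^ 2) := by ring
    _ ≤ (L/π)^2 * ((∫ s in (0:ℝ)..L, u' s ^ 2) + π * K^2 * 0) := h
    _ = (L/π)^2 * ∫ s in (0:ℝ)..L, u' s ^ 2 := by ring

lemma hasDerivAt_param_integral {L : ℝ} (hL : 0 < L) (F F' : ℝ → ℝ → ℝ)
    (hF : Continuous fun p : ℝ × ℝ => F p.1 p.2)
    (hF' : Continuous fun p : ℝ × ℝ => F' p.1 p.2)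
    (hdiff : ∀ s t, HasDerivAt (fun t' => F s t') (F' s t) t)
    (t₀ : ℝ) :
    HasDerivAt (fun t => ∫ s in (0:ℝ)..L, F s t) (∫ s in (0:ℝ)..L, F' s t₀) t₀ := by
  -- bound for F' on the compact set [0,L] × [t₀-1,t₀+1]
  obtain ⟨M, hM⟩ := (IsCompact.prod (isCompact_Icc (a := (0:ℝ)) (b := L))
    (isCompact_Icc (a := t₀ - 1) (b := t₀ + 1))).exists_bound_of_continuousOn hF'.continuousOn
  have key := intervalIntegral.hasDerivAt_integral_of_dominated_loc_of_deriv_le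
    (F := fun t s => F s t) (F' := fun t s => F' s t) (bound := fun _ => M)
    (a := (0:ℝ)) (b := L) (x₀ := t₀) (μ := volume) (s := Metric.ball t₀ 1) (Metric.ball_mem_nhds t₀ one_pos)
    ?meas ?int ?meas' ?bound ?bint ?diff
  · exact key.2
  case meas =>
    filter_upwards with x
    exact ((hF.comp (continuous_id.prodMk continuous_const)).aestronglyMeasurable).restrict
  case int => exact (hF.comp (continuous_id.prodMk continuous_const)).intervalIntegrable 0 L
  case meas' =>
    exact ((hF'.comp (continuous_id.prodMk continuous_const)).aestronglyMeasurable).restrict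
  case bound =>
    filter_upwards with s hs x hx
    rw [Set.uIoc_of_le hL.le] at hs
    refine hM (s, x) ⟨⟨hs.1.le, hs.2⟩, ?_⟩
    rw [Metric.mem_ball, Real.dist_eq] at hx
    constructor <;> [linarith [abs_lt.1 hx |>.1]; linarith [abs_lt.1 hx |>.2]]
  case bint => exact intervalIntegrable_const
  case diff =>
    filter_upwards with s hs x hx
    exact hdiff s x

lemma vR_dd {R : ℝ} (hR : R ≠ 0) (vR : ℝ → Fin 3 → ℝ)
    (hvR : ∀ s, vR s = ![Real.cos (s / R), -Real.sin (s / R), 0]) (s : ℝ) :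
    deriv (deriv vR) s = fun i => -(1 / R ^ 2) * vR s i := by
  have hvRf : vR = fun s => ![Real.cos (s / R), -Real.sin (s / R), 0] := funext hvR
  set w1 : ℝ → Fin 3 → ℝ :=
    fun s => ![-Real.sin (s / R) * (1/R), -(Real.cos (s / R) * (1/R)), 0] with hw1
  have hdiv : ∀ x : ℝ, HasDerivAt (fun y : ℝ => y / R) (1/R) x := by
    intro x
    simpa using (hasDerivAt_id x).div_const R
  have h1 : ∀ x, HasDerivAt vR (w1 x) x := by
    intro x
    rw [hvRf]
    apply hasDerivAt_pi.2
    intro i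
    fin_cases i
    · show HasDerivAt (fun x : ℝ => Real.cos (x / R)) (-Real.sin (x / R) * (1/R)) x
      exact (Real.hasDerivAt_cos (x / R)).comp x (hdiv x)
    · show HasDerivAt (fun x : ℝ => -Real.sin (x / R)) (-(Real.cos (x / R) * (1/R))) x
      exact ((Real.hasDerivAt_sin (x / R)).comp x (hdiv x)).neg
    · show HasDerivAt (fun _ : ℝ => (0:ℝ)) 0 x
      exact hasDerivAt_const x (0:ℝ)
  have h2 : ∀ x, HasDerivAt w1 (fun i => -(1 / R ^ 2) * vR x i) x := by
    intro x
    apply hasDerivAt_pi.2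
    intro i
    fin_cases i
    · show HasDerivAt (fun x : ℝ => -Real.sin (x / R) * (1/R)) (-(1 / R ^ 2) * vR x 0) x
      have h := (((Real.hasDerivAt_sin (x / R)).comp x (hdiv x)).neg).mul_const (1/R)
      refine h.congr_deriv (Eq.symm ?_)
      rw [hvR]
      show -(1 / R ^ 2) * Real.cos (x / R) = -(Real.cos (x / R) * (1/R)) * (1/R)
      ring
    · show HasDerivAt (fun x : ℝ => -(Real.cos (x / R) * (1/R))) (-(1 / R ^ 2) * vR x 1) x
      have h := (((Real.hasDerivAt_cos (x / R)).comp x (hdiv x)).mul_const (1/R)).neg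
      refine h.congr_deriv (Eq.symm ?_)
      rw [hvR]
      show -(1 / R ^ 2) * (-Real.sin (x / R)) = -(-Real.sin (x / R) * (1/R) * (1/R))
      ring
    · show HasDerivAt (fun _ : ℝ => (0:ℝ)) (-(1 / R ^ 2) * vR x 2) x
      have h := hasDerivAt_const x (0:ℝ)
      refine h.congr_deriv (Eq.symm ?_)
      rw [hvR]
      show -(1 / R ^ 2) * (0:ℝ) = 0
      ring
  rw [show deriv vR = w1 from funext fun x => (h1 x).deriv]
  exact (h2 s).deriv
end AuxLemmas

open Aux in
/-- H¹ stability of the zero perturbation around the arc-shaped solution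
when `R > L/π`; the constant depends only on `L` and `R`. -/
theorem perturbation_H1_stability
    (L R : ℝ) (hL : 0 < L) (hR : L / Real.pi < R) :
    ∃ C > 0, ∀ (vR : ℝ → Fin 3 → ℝ),
      (∀ s, vR s = ![Real.cos (s / R), -Real.sin (s / R), 0]) →
      ∀ (φ : ℝ → ℝ → Fin 3 → ℝ), ContDiff ℝ (⊤ : ℕ∞) (Function.uncurry φ) →
      (∀ s ∈ Set.Icc (0:ℝ) L, ∀ t ∈ Set.Ici (0:ℝ),
        pT φ s t = cross3 (φ s t) (pS (pS φ) s t)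
          + cross3 (φ s t) (deriv (deriv vR) s)
          + cross3 (vR s) (pS (pS φ) s t)) →
      (∀ t ∈ Set.Ici (0:ℝ), φ 0 t = 0 ∧ φ L t = 0) →
      ∀ t ∈ Set.Ici (0:ℝ),
        sobNorm3 1 L (fun s => φ s t) ≤ C * sobNorm3 1 L (fun s => φ s 0) := by
  have hπ : (0:ℝ) < π := Real.pi_pos
  have hLπ : 0 < L / π := div_pos hL hπ
  have hR0 : 0 < R := lt_trans hLπ hR
  set β : ℝ := (L/π)^2 with hβ_def
  set α : ℝ := 1/R^2 with hα_def
  have hβ : 0 < β := by positivity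
  have hα : 0 < α := by positivity
  have hαβ : α * β < 1 := by
    have h1 : (L/π)^2 < R^2 := by nlinarith
    have : α * β = (L/π)^2 / R^2 := by rw [hα_def, hβ_def]; ring
    rw [this]
    exact (div_lt_one (by positivity)).2 h1
  have hD : 0 < (1+β)/(1-α*β) := div_pos (by linarith) (by linarith)
  refine ⟨Real.sqrt ((1+β)/(1-α*β)), Real.sqrt_pos.2 hD, ?_⟩
  intro vR hvR φ hφ hpde hbc t ht
  -- smoothness bookkeeping
  set f : ℝ × ℝ → Fin 3 → ℝ := Function.uncurry φ with hf_def
  have hf : ContDiff ℝ (⊤ : ℕ∞) f := hφ.of_le (by simp)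
  set G1 : ℝ × ℝ → Fin 3 → ℝ := fun p => fderiv ℝ f p (1, 0) with hG1_def
  set G2 : ℝ × ℝ → Fin 3 → ℝ := fun p => fderiv ℝ f p (0, 1) with hG2_def
  have hG1smooth : ContDiff ℝ (⊤ : ℕ∞) G1 := contDiff_fderiv_apply hf _
  have hG2smooth : ContDiff ℝ (⊤ : ℕ∞) G2 := contDiff_fderiv_apply hf _
  set H11 : ℝ × ℝ → Fin 3 → ℝ := fun p => fderiv ℝ G1 p (1, 0) with hH11_def
  set H12 : ℝ × ℝ → Fin 3 → ℝ := fun p => fderiv ℝ G1 p (0, 1) with hH12_def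
  set H21 : ℝ × ℝ → Fin 3 → ℝ := fun p => fderiv ℝ G2 p (1, 0) with hH21_def
  have hG1s : ∀ s t, HasDerivAt (fun s' => φ s' t) (G1 (s, t)) s := fun s t =>
    hasDerivAt_fst hf s t
  have hG2t : ∀ s t, HasDerivAt (fun t' => φ s t') (G2 (s, t)) t := fun s t =>
    hasDerivAt_snd hf s t
  have hH11s : ∀ s t, HasDerivAt (fun s' => G1 (s', t)) (H11 (s, t)) s := fun s t =>
    hasDerivAt_fst hG1smooth s t
  have hH12t : ∀ s t, HasDerivAt (fun t' => G1 (s, t')) (H12 (s, t)) t := fun s t =>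
    hasDerivAt_snd hG1smooth s t
  have hH21s : ∀ s t, HasDerivAt (fun s' => G2 (s', t)) (H21 (s, t)) s := fun s t =>
    hasDerivAt_fst hG2smooth s t
  have hswap : ∀ p, H12 p = H21 p := fun p => fderiv_swap hf p (1, 0) (0, 1)
  have hpSeq : ∀ s t, pS φ s t = G1 (s, t) := fun s t => (hG1s s t).deriv
  have hpTeq : ∀ s t, pT φ s t = G2 (s, t) := fun s t => (hG2t s t).deriv
  have hpSSeq : ∀ s t, pS (pS φ) s t = H11 (s, t) := by
    intro s t
    have he : (fun s' => pS φ s' t) = (fun s' => G1 (s', t)) := funext fun s' => hpSeq s' t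
    show deriv (fun s' => pS φ s' t) s = H11 (s, t)
    rw [he]
    exact (hH11s s t).deriv
  -- continuity facts
  have hpair : ∀ t₀ : ℝ, Continuous (fun s : ℝ => ((s : ℝ), t₀)) := fun t₀ =>
    continuous_id.prodMk continuous_const
  have hppair : Continuous (fun p : ℝ × ℝ => ((p.1 : ℝ), p.2)) :=
    continuous_fst.prodMk continuous_snd
  have φc : Continuous f := hf.continuous
  have G1c : Continuous G1 := hG1smooth.continuous
  have G2c : Continuous G2 := hG2smooth.continuous
  have H11c : Continuous H11 := (contDiff_fderiv_apply hG1smooth _).continuous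
  have H12c : Continuous H12 := (contDiff_fderiv_apply hG1smooth _).continuous
  have H21c : Continuous H21 := (contDiff_fderiv_apply hG2smooth _).continuous
  -- the two pieces of the energy
  set P : ℝ → ℝ := fun t' => ∫ s in (0:ℝ)..L, dot3 (φ s t') (φ s t') with hP_def
  set Q : ℝ → ℝ := fun t' => ∫ s in (0:ℝ)..L, dot3 (G1 (s, t')) (G1 (s, t')) with hQ_def
  set E : ℝ → ℝ := fun t' => Q t' - α * P t' with hE_def
  have hQd : ∀ t₀ : ℝ, HasDerivAt Q
      (∫ s in (0:ℝ)..L, 2 * dot3 (G1 (s, t₀)) (H12 (s, t₀))) t₀ := by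
    intro t₀
    apply hasDerivAt_param_integral hL
      (fun s t' => dot3 (G1 (s, t')) (G1 (s, t')))
      (fun s t' => 2 * dot3 (G1 (s, t')) (H12 (s, t')))
    · exact Continuous.dot3'' (G1c.comp hppair) (G1c.comp hppair)
    · exact continuous_const.mul (Continuous.dot3'' (G1c.comp hppair) (H12c.comp hppair))
    · intro s t'
      have hder := HasDerivAt.dot3' (hH12t s t') (hH12t s t')
      have h2 : dot3 (H12 (s, t')) (G1 (s, t')) + dot3 (G1 (s, t')) (H12 (s, t'))
          = 2 * dot3 (G1 (s, t')) (H12 (s, t')) := by rw [dot3_comm]; ring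
      rw [← h2]
      exact hder
  have hPd : ∀ t₀ : ℝ, HasDerivAt P
      (∫ s in (0:ℝ)..L, 2 * dot3 (φ s t₀) (G2 (s, t₀))) t₀ := by
    intro t₀
    apply hasDerivAt_param_integral hL
      (fun s t' => dot3 (φ s t') (φ s t'))
      (fun s t' => 2 * dot3 (φ s t') (G2 (s, t')))
    · exact Continuous.dot3'' (φc.comp hppair) (φc.comp hppair)
    · exact continuous_const.mul (Continuous.dot3'' (φc.comp hppair) (G2c.comp hppair))
    · intro s t'
      have hder := HasDerivAt.dot3' (hG2t s t') (hG2t s t')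
      have h2 : dot3 (G2 (s, t')) (φ s t') + dot3 (φ s t') (G2 (s, t'))
          = 2 * dot3 (φ s t') (G2 (s, t')) := by rw [dot3_comm]; ring
      rw [← h2]
      exact hder
  have hEd : ∀ t₀ : ℝ, HasDerivAt E
      ((∫ s in (0:ℝ)..L, 2 * dot3 (G1 (s, t₀)) (H12 (s, t₀)))
        - α * ∫ s in (0:ℝ)..L, 2 * dot3 (φ s t₀) (G2 (s, t₀))) t₀ := fun t₀ =>
    (hQd t₀).sub ((hPd t₀).const_mul α)
  -- the derivative of the energy vanishes for positive times
  have hD0 : ∀ t₀ : ℝ, 0 < t₀ →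
      (∫ s in (0:ℝ)..L, 2 * dot3 (G1 (s, t₀)) (H12 (s, t₀)))
        - α * ∫ s in (0:ℝ)..L, 2 * dot3 (φ s t₀) (G2 (s, t₀)) = 0 := by
    intro t₀ ht₀
    -- boundary values of the time derivative vanish
    have hbdry : ∀ x : ℝ, (∀ t' ∈ Ici (0:ℝ), φ x t' = 0) → G2 (x, t₀) = 0 := by
      intro x hx
      have hev : (fun t' => φ x t') =ᶠ[nhds t₀] (fun _ => (0 : Fin 3 → ℝ)) := by
        filter_upwards [Ioi_mem_nhds ht₀] with y hy
        exact hx y (show (0:ℝ) ≤ y from le_of_lt hy)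
      have hd := (hG2t x t₀).deriv
      rw [← hd, hev.deriv_eq, deriv_const]
    have hψ0 : G2 (0, t₀) = 0 := hbdry 0 (fun t' ht' => (hbc t' ht').1)
    have hψL : G2 (L, t₀) = 0 := hbdry L (fun t' ht' => (hbc t' ht').2)
    -- the PDE rewritten with our notations
    have hψeq : ∀ s ∈ Icc (0:ℝ) L, G2 (s, t₀)
        = cross3 (φ s t₀) (H11 (s, t₀)) + cross3 (φ s t₀) (deriv (deriv vR) s)
          + cross3 (vR s) (H11 (s, t₀)) := by
      intro s hs
      have := hpde s hs t₀ (le_of_lt ht₀)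
      rwa [hpTeq, hpSSeq] at this
    have hvR'' : ∀ s : ℝ, deriv (deriv vR) s = fun i => -(1 / R ^ 2) * vR s i :=
      vR_dd hR0.ne' vR hvR
    set X : ℝ → ℝ := fun s => dot3 (φ s t₀) (cross3 (vR s) (H11 (s, t₀))) with hX_def
    have h1 : ∀ s ∈ Icc (0:ℝ) L, dot3 (φ s t₀) (G2 (s, t₀)) = X s := by
      intro s hs
      rw [hψeq s hs, dot3_add_right, dot3_add_right, dot3_cross_self', hvR'' s,
        dot3_cross_smul, dot3_cross_self']
      simp [hX_def]
    have h2 : ∀ s ∈ Icc (0:ℝ) L, dot3 (H11 (s, t₀)) (G2 (s, t₀)) = -α * X s := by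
      intro s hs
      rw [hψeq s hs, dot3_add_right, dot3_add_right, dot3_cross_self, hvR'' s,
        dot3_cross_smul, dot3_cross_self, triple_rot]
      rw [hX_def, hα_def]
      ring
    -- integration by parts
    have hibp : ∫ s in (0:ℝ)..L,
        (dot3 (H11 (s, t₀)) (G2 (s, t₀)) + dot3 (G1 (s, t₀)) (H12 (s, t₀)))
        = dot3 (G1 (L, t₀)) (G2 (L, t₀)) - dot3 (G1 (0, t₀)) (G2 (0, t₀)) := by
      apply integral_eq_sub_of_hasDerivAt
      · intro x _
        have hder := HasDerivAt.dot3' (hH11s x t₀) (hH21s x t₀)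
        rw [hswap (x, t₀)]
        exact hder
      · apply Continuous.intervalIntegrable
        exact (Continuous.dot3'' (H11c.comp (hpair t₀)) (G2c.comp (hpair t₀))).add
          (Continuous.dot3'' (G1c.comp (hpair t₀)) (H12c.comp (hpair t₀)))
    rw [hψ0, hψL, dot3_zero, dot3_zero, sub_zero] at hibp
    have hintH : IntervalIntegrable (fun s => dot3 (H11 (s, t₀)) (G2 (s, t₀))) volume 0 L :=
      (Continuous.dot3'' (H11c.comp (hpair t₀)) (G2c.comp (hpair t₀))).intervalIntegrable 0 L
    have hintG : IntervalIntegrable (fun s => dot3 (G1 (s, t₀)) (H12 (s, t₀))) volume 0 L :=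
      (Continuous.dot3'' (G1c.comp (hpair t₀)) (H12c.comp (hpair t₀))).intervalIntegrable 0 L
    rw [intervalIntegral.integral_add hintH hintG] at hibp
    have hA1 : ∫ s in (0:ℝ)..L, dot3 (H11 (s, t₀)) (G2 (s, t₀))
        = -α * ∫ s in (0:ℝ)..L, X s := by
      rw [← intervalIntegral.integral_const_mul]
      apply intervalIntegral.integral_congr
      intro s hs
      rw [Set.uIcc_of_le hL.le] at hs
      exact h2 s hs
    have hA2 : ∫ s in (0:ℝ)..L, dot3 (φ s t₀) (G2 (s, t₀)) = ∫ s in (0:ℝ)..L, X s := by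
      apply intervalIntegral.integral_congr
      intro s hs
      rw [Set.uIcc_of_le hL.le] at hs
      exact h1 s hs
    rw [intervalIntegral.integral_const_mul, intervalIntegral.integral_const_mul, hA2]
    have hG1H12 : ∫ s in (0:ℝ)..L, dot3 (G1 (s, t₀)) (H12 (s, t₀))
        = α * ∫ s in (0:ℝ)..L, X s := by
      rw [hA1] at hibp
      linarith
    rw [hG1H12]
    ring
  -- the energy is constant on [0, ∞)
  have hEcont : Continuous E := by
    rw [continuous_iff_continuousAt]
    intro t'
    exact (hEd t').differentiableAt.continuousAt
  have hEconst : ∀ t' ∈ Ici (0:ℝ), E t' = E 0 := by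
    intro t' ht'
    rcases eq_or_lt_of_le (show (0:ℝ) ≤ t' from ht') with h | h
    · rw [← h]
    · have hconst : ∀ a ∈ Ioc (0:ℝ) t', E t' = E a := by
        intro a ha
        have hder : ∀ x ∈ Ico a t', HasDerivWithinAt E 0 (Ici x) x := by
          intro x hx
          have h0 := hD0 x (lt_of_lt_of_le ha.1 hx.1)
          have hdx := hEd x
          rw [h0] at hdx
          exact hdx.hasDerivWithinAt
        exact (constant_of_has_deriv_right_zero (hEcont.continuousOn) hder t'
          (right_mem_Icc.2 ha.2)).symm ▸ rfl
      have htend : Filter.Tendsto E (nhdsWithin 0 (Ioi 0)) (nhds (E 0)) :=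
        (hEcont.tendsto 0).mono_left nhdsWithin_le_nhds
      have htend2 : Filter.Tendsto E (nhdsWithin 0 (Ioi 0)) (nhds (E t')) := by
        apply Filter.Tendsto.congr' _ tendsto_const_nhds
        filter_upwards [Ioc_mem_nhdsGT_of_mem (⟨le_rfl, h⟩ : (0:ℝ) ∈ Ico (0:ℝ) t')] with a ha
        exact hconst a ha
      exact tendsto_nhds_unique htend2 htend
  -- positivity of P and Q
  have hPpos : ∀ t' : ℝ, 0 ≤ P t' := by
    intro t'
    apply intervalIntegral.integral_nonneg hL.le
    intro s _
    exact dot3_nonneg _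
  have hQpos : ∀ t' : ℝ, 0 ≤ Q t' := by
    intro t'
    apply intervalIntegral.integral_nonneg hL.le
    intro s _
    exact dot3_nonneg _
  -- Poincaré inequality componentwise
  have hPQ : ∀ t' ∈ Ici (0:ℝ), P t' ≤ β * Q t' := by
    intro t' ht'
    have hdot : ∀ a : Fin 3 → ℝ, dot3 a a = a 0 ^ 2 + a 1 ^ 2 + a 2 ^ 2 := by
      intro a; rw [dot3]; ring
    have hcomp : ∀ i : Fin 3, Continuous (fun s => φ s t' i) := fun i =>
      (continuous_apply i).comp (φc.comp (hpair t'))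
    have hcompG : ∀ i : Fin 3, Continuous (fun s => G1 (s, t') i) := fun i =>
      (continuous_apply i).comp (G1c.comp (hpair t'))
    have hPsum : P t' = ∑ i : Fin 3, ∫ s in (0:ℝ)..L, (φ s t' i) ^ 2 := by
      rw [hP_def]
      simp only [Fin.sum_univ_three]
      rw [← intervalIntegral.integral_add (f := fun s => φ s t' 0 ^ 2) (g := fun s => φ s t' 1 ^ 2)
        (((hcomp 0).pow 2).intervalIntegrable 0 L)
        (((hcomp 1).pow 2).intervalIntegrable 0 L),
        ← intervalIntegral.integral_add (f := fun s => φ s t' 0 ^ 2 + φ s t' 1 ^ 2)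
          (g := fun s => φ s t' 2 ^ 2) ((((hcomp 0).pow 2).intervalIntegrable 0 L).add
          (((hcomp 1).pow 2).intervalIntegrable 0 L))
        (((hcomp 2).pow 2).intervalIntegrable 0 L)]
      apply intervalIntegral.integral_congr
      intro s _
      exact hdot _
    have hQsum : Q t' = ∑ i : Fin 3, ∫ s in (0:ℝ)..L, (G1 (s, t') i) ^ 2 := by
      rw [hQ_def]
      simp only [Fin.sum_univ_three]
      rw [← intervalIntegral.integral_add (f := fun s => G1 (s, t') 0 ^ 2) (g := fun s => G1 (s, t') 1 ^ 2)
        (((hcompG 0).pow 2).intervalIntegrable 0 L)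
        (((hcompG 1).pow 2).intervalIntegrable 0 L),
        ← intervalIntegral.integral_add (f := fun s => G1 (s, t') 0 ^ 2 + G1 (s, t') 1 ^ 2)
          (g := fun s => G1 (s, t') 2 ^ 2) ((((hcompG 0).pow 2).intervalIntegrable 0 L).add
          (((hcompG 1).pow 2).intervalIntegrable 0 L))
        (((hcompG 2).pow 2).intervalIntegrable 0 L)]
      apply intervalIntegral.integral_congr
      intro s _
      exact hdot _
    have hcompP : ∀ i : Fin 3, ∫ s in (0:ℝ)..L, (φ s t' i) ^ 2
        ≤ β * ∫ s in (0:ℝ)..L, (G1 (s, t') i) ^ 2 := by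
      intro i
      apply poincare_scalar hL
        (u := fun s => φ s t' i) (u' := fun s => G1 (s, t') i)
      · intro s
        exact (hasDerivAt_pi.1 (hG1s s t')) i
      · exact hcompG i
      · rw [(hbc t' ht').1]; rfl
      · rw [(hbc t' ht').2]; rfl
    rw [hPsum, hQsum, Finset.mul_sum]
    apply Finset.sum_le_sum
    intro i _
    exact hcompP i
  -- final algebra
  have hE := hEconst t ht
  have h1 := hPQ t ht
  rw [hE_def] at hE
  simp only at hE
  have e1 : Q t * (1 - α*β) ≤ Q 0 := by
    nlinarith [mul_le_mul_of_nonneg_left h1 hα.le, mul_nonneg hα.le (hPpos 0)]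
  have e3 : Q t ≤ Q 0 / (1-α*β) := by
    rw [le_div_iff₀ (by linarith)]
    exact e1
  have hkey : P t + Q t ≤ ((1+β)/(1-α*β)) * (P 0 + Q 0) := by
    calc P t + Q t ≤ (1+β) * Q t := by nlinarith
      _ ≤ (1+β) * (Q 0/(1-α*β)) := by
          apply mul_le_mul_of_nonneg_left e3 (by linarith)
      _ = ((1+β)/(1-α*β)) * Q 0 := by ring
      _ ≤ ((1+β)/(1-α*β)) * (P 0 + Q 0) := by
          apply mul_le_mul_of_nonneg_left _ hD.le
          linarith [hPpos 0]
  -- rewrite the Sobolev norms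
  have hsob : ∀ t' : ℝ, sobNorm3 1 L (fun s => φ s t') = Real.sqrt (P t' + Q t') := by
    intro t'
    rw [sobNorm3]
    congr 1
    rw [Finset.sum_range_succ, Finset.sum_range_one]
    have hd : deriv (fun s => φ s t') = fun s => G1 (s, t') :=
      funext fun s => (hG1s s t').deriv
    have h0 : ∫ s in (0:ℝ)..L, norm3 (iteratedDeriv 0 (fun s => φ s t') s) ^ 2 = P t' := by
      apply intervalIntegral.integral_congr
      intro s _
      simp only [iteratedDeriv_zero, norm3_sq]
    have h1' : ∫ s in (0:ℝ)..L, norm3 (iteratedDeriv 1 (fun s => φ s t') s) ^ 2 = Q t' := by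
      apply intervalIntegral.integral_congr
      intro s _
      simp only [iteratedDeriv_one, hd, norm3_sq]
    rw [h0, h1']
  rw [hsob t, hsob 0]
  calc Real.sqrt (P t + Q t) ≤ Real.sqrt (((1+β)/(1-α*β)) * (P 0 + Q 0)) :=
        Real.sqrt_le_sqrt hkey
    _ = Real.sqrt ((1+β)/(1-α*β)) * Real.sqrt (P 0 + Q 0) :=
        Real.sqrt_mul hD.le _
end
end

section
/- Let L > 0 and let v : [0, L] × [0, ∞) → ℝ³ be a smooth solution of the vortex filament equation v_t = v × vₛₛ with |v(s, t)| = 1 for all (s, t) and with time-independent boundary values v(0, t) and v(L, t). Then the quantity E₁(v(t)) := ∫₀ᴸ |vₛₛ(s, t)|² ds − (5/4) ∫₀ᴸ |vₛ(s, t)|⁴ ds is independent of t. -/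
open Real MeasureTheory Set

noncomputable section

namespace VFEaux
open Filter

variable {E : Type*} [NormedAddCommGroup E] [NormedSpace ℝ E]

/-- partial derivative in first coordinate, as a function on ℝ × ℝ -/
def D1 (g : ℝ × ℝ → E) : ℝ × ℝ → E := fun p => fderiv ℝ g p (1, 0)
/-- partial derivative in second coordinate -/
def D2 (g : ℝ × ℝ → E) : ℝ × ℝ → E := fun p => fderiv ℝ g p (0, 1)

theorem contDiff_D1 {g : ℝ × ℝ → E} (hg : ContDiff ℝ (⊤ : ℕ∞) g) :
    ContDiff ℝ (⊤ : ℕ∞) (D1 g) := by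
  have h := hg.fderiv_right (m := (⊤ : ℕ∞)) le_rfl
  exact (ContinuousLinearMap.apply ℝ E ((1:ℝ), (0:ℝ))).contDiff.comp h

theorem contDiff_D2 {g : ℝ × ℝ → E} (hg : ContDiff ℝ (⊤ : ℕ∞) g) :
    ContDiff ℝ (⊤ : ℕ∞) (D2 g) := by
  have h := hg.fderiv_right (m := (⊤ : ℕ∞)) le_rfl
  exact (ContinuousLinearMap.apply ℝ E ((0:ℝ), (1:ℝ))).contDiff.comp h

theorem slice1 {g : ℝ × ℝ → E} (s t : ℝ) (hg : DifferentiableAt ℝ g (s, t)) :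
    HasDerivAt (fun s' => g (s', t)) (D1 g (s, t)) s := by
  have h1 : HasDerivAt (fun s' : ℝ => ((s', t) : ℝ × ℝ)) ((1:ℝ), (0:ℝ)) s :=
    (hasDerivAt_id s).prodMk (hasDerivAt_const s t)
  exact hg.hasFDerivAt.comp_hasDerivAt s h1

theorem slice2 {g : ℝ × ℝ → E} (s t : ℝ) (hg : DifferentiableAt ℝ g (s, t)) :
    HasDerivAt (fun t' => g (s, t')) (D2 g (s, t)) t := by
  have h1 : HasDerivAt (fun t' : ℝ => ((s, t') : ℝ × ℝ)) ((0:ℝ), (1:ℝ)) t :=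
    (hasDerivAt_const t s).prodMk (hasDerivAt_id t)
  exact hg.hasFDerivAt.comp_hasDerivAt t h1

/-- Clairaut/Schwarz for smooth functions on ℝ². -/
theorem clairaut {g : ℝ × ℝ → E} (hg : ContDiff ℝ (⊤ : ℕ∞) g) (p : ℝ × ℝ) :
    D1 (D2 g) p = D2 (D1 g) p := by
  have hdiff : ∀ y, HasFDerivAt g (fderiv ℝ g y) y := fun y =>
    (hg.differentiable (by simp)).differentiableAt.hasFDerivAt
  have h2 : DifferentiableAt ℝ (fderiv ℝ g) p := by
    have := hg.fderiv_right (m := (⊤ : ℕ∞)) le_rfl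
    exact (this.differentiable (by simp)).differentiableAt
  have hsymm := second_derivative_symmetric hdiff h2.hasFDerivAt
  have e1 : D1 (D2 g) p = fderiv ℝ (fderiv ℝ g) p (1, 0) (0, 1) := by
    have : HasFDerivAt (D2 g)
        (((ContinuousLinearMap.apply ℝ E ((0:ℝ),(1:ℝ)))).comp (fderiv ℝ (fderiv ℝ g) p)) p :=
      (ContinuousLinearMap.apply ℝ E ((0:ℝ),(1:ℝ))).hasFDerivAt.comp p h2.hasFDerivAt
    simp [D1, this.fderiv]
  have e2 : D2 (D1 g) p = fderiv ℝ (fderiv ℝ g) p (0, 1) (1, 0) := by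
    have : HasFDerivAt (D1 g)
        (((ContinuousLinearMap.apply ℝ E ((1:ℝ),(0:ℝ)))).comp (fderiv ℝ (fderiv ℝ g) p)) p :=
      (ContinuousLinearMap.apply ℝ E ((1:ℝ),(0:ℝ))).hasFDerivAt.comp p h2.hasFDerivAt
    simp [D2, this.fderiv]
  rw [e1, e2, hsymm]



theorem dot3_self_nonneg (a : Fin 3 → ℝ) : 0 ≤ dot3 a a := by
  unfold dot3
  nlinarith [mul_self_nonneg (a 0), mul_self_nonneg (a 1), mul_self_nonneg (a 2)]

theorem norm3_sq (a : Fin 3 → ℝ) : norm3 a ^ 2 = dot3 a a :=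
  Real.sq_sqrt (dot3_self_nonneg a)

theorem norm3_pow4 (a : Fin 3 → ℝ) : norm3 a ^ 4 = (dot3 a a) ^ 2 := by
  have := norm3_sq a
  nlinarith [this]

theorem hasDerivAt_dot3 {x : ℝ} {g h : ℝ → Fin 3 → ℝ} {g' h' : Fin 3 → ℝ}
    (hg : HasDerivAt g g' x) (hh : HasDerivAt h h' x) :
    HasDerivAt (fun y => dot3 (g y) (h y)) (dot3 g' (h x) + dot3 (g x) h') x := by
  have G := fun i => hasDerivAt_pi.mp hg i
  have H := fun i => hasDerivAt_pi.mp hh i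
  have key := (((G 0).mul (H 0)).add ((G 1).mul (H 1))).add ((G 2).mul (H 2))
  exact key.congr_deriv (by unfold dot3; ring)

theorem hasDerivAt_cross3 {x : ℝ} {g h : ℝ → Fin 3 → ℝ} {g' h' : Fin 3 → ℝ}
    (hg : HasDerivAt g g' x) (hh : HasDerivAt h h' x) :
    HasDerivAt (fun y => cross3 (g y) (h y)) (cross3 g' (h x) + cross3 (g x) h') x := by
  have G := fun i => hasDerivAt_pi.mp hg i
  have H := fun i => hasDerivAt_pi.mp hh i
  rw [hasDerivAt_pi]
  intro i
  fin_cases i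
  · have key := ((G 1).mul (H 2)).sub ((G 2).mul (H 1))
    convert key using 1
    show (cross3 g' (h x) + cross3 (g x) h') _ = _
    simp [cross3, Pi.add_apply]; ring
    rfl
  · have key := ((G 2).mul (H 0)).sub ((G 0).mul (H 2))
    convert key using 1
    show (cross3 g' (h x) + cross3 (g x) h') _ = _
    simp [cross3, Pi.add_apply]; ring
    rfl
  · have key := ((G 0).mul (H 1)).sub ((G 1).mul (H 0))
    convert key using 1
    show (cross3 g' (h x) + cross3 (g x) h') _ = _
    simp [cross3, Pi.add_apply]; ring
    rfl

theorem contDiff_proj_comp {α : Type*} [NormedAddCommGroup α] [NormedSpace ℝ α]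
    {g : α → Fin 3 → ℝ} (hg : ContDiff ℝ (⊤ : ℕ∞) g) (i : Fin 3) :
    ContDiff ℝ (⊤ : ℕ∞) (fun y => g y i) := by
  have := (ContinuousLinearMap.proj (R := ℝ) (φ := fun _ : Fin 3 => ℝ) i).contDiff.comp hg
  exact this

theorem contDiff_dot3_comp {α : Type*} [NormedAddCommGroup α] [NormedSpace ℝ α]
    {g h : α → Fin 3 → ℝ} (hg : ContDiff ℝ (⊤ : ℕ∞) g) (hh : ContDiff ℝ (⊤ : ℕ∞) h) :
    ContDiff ℝ (⊤ : ℕ∞) (fun y => dot3 (g y) (h y)) := by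
  have G := contDiff_proj_comp hg
  have H := contDiff_proj_comp hh
  unfold dot3
  exact (((G 0).mul (H 0)).add ((G 1).mul (H 1))).add ((G 2).mul (H 2))

theorem contDiff_cross3_comp {α : Type*} [NormedAddCommGroup α] [NormedSpace ℝ α]
    {g h : α → Fin 3 → ℝ} (hg : ContDiff ℝ (⊤ : ℕ∞) g) (hh : ContDiff ℝ (⊤ : ℕ∞) h) :
    ContDiff ℝ (⊤ : ℕ∞) (fun y => cross3 (g y) (h y)) := by
  have G := contDiff_proj_comp hg
  have H := contDiff_proj_comp hh
  apply contDiff_pi.mpr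
  intro i
  fin_cases i
  · have key := ((G 1).mul (H 2)).sub ((G 2).mul (H 1))
    exact key
  · have key := ((G 2).mul (H 0)).sub ((G 0).mul (H 2))
    exact key
  · have key := ((G 0).mul (H 1)).sub ((G 1).mul (H 0))
    exact key


/-- Differentiation under the interval integral for a C¹ (here: smooth) integrand. -/
theorem hasDerivAt_param_integral {Φ : ℝ × ℝ → ℝ} (hΦ : ContDiff ℝ (⊤ : ℕ∞) Φ)
    (L t₀ : ℝ) :
    HasDerivAt (fun t => ∫ s in (0:ℝ)..L, Φ (s, t))
      (∫ s in (0:ℝ)..L, D2 Φ (s, t₀)) t₀ := by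
  have hΦc : Continuous Φ := hΦ.continuous
  have hD2 : ContDiff ℝ (⊤ : ℕ∞) (D2 Φ) := by
    have h := hΦ.fderiv_right (m := (⊤ : ℕ∞)) le_rfl
    exact (ContinuousLinearMap.apply ℝ ℝ ((0:ℝ), (1:ℝ))).contDiff.comp h
  have hD2c : Continuous (D2 Φ) := hD2.continuous
  -- bound on compact set
  obtain ⟨M, hM⟩ : ∃ M, ∀ p ∈ (uIcc (0:ℝ) L) ×ˢ (Icc (t₀ - 1) (t₀ + 1)), ‖D2 Φ p‖ ≤ M := by
    rcases (isCompact_uIcc.prod isCompact_Icc).exists_bound_of_continuousOn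
      hD2c.continuousOn with ⟨M, hM⟩
    exact ⟨M, hM⟩
  have main := intervalIntegral.hasDerivAt_integral_of_dominated_loc_of_deriv_le
    (F := fun t s => Φ (s, t)) (F' := fun t s => D2 Φ (s, t)) (x₀ := t₀)
    (a := 0) (b := L) (μ := volume) (bound := fun _ => M) (s := Metric.ball t₀ 1) (Metric.ball_mem_nhds t₀ one_pos)
    (Filter.Eventually.of_forall fun x =>
      ((hΦc.comp (continuous_id.prodMk continuous_const)).aestronglyMeasurable))
    ((hΦc.comp (continuous_id.prodMk continuous_const)).intervalIntegrable 0 L)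
    ((hD2c.comp (continuous_id.prodMk continuous_const)).aestronglyMeasurable)
    (Filter.Eventually.of_forall fun s hs x hx => by
      apply hM
      constructor
      · exact uIoc_subset_uIcc hs
      · have : |x - t₀| < 1 := by simpa [Real.dist_eq] using hx
        constructor <;> [linarith [abs_lt.mp this]; linarith [(abs_lt.mp this).2]]
      )
    (intervalIntegrable_const)
    (Filter.Eventually.of_forall fun s _ x _ =>
      slice2 s x (hΦ.differentiable (by simp) (s, x)))
  exact main.2



theorem key_algebra (a b c d e : Fin 3 → ℝ)
    (h1 : dot3 a a = 1) (h2 : dot3 a b = 0)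
    (h3 : dot3 b b + dot3 a c = 0)
    (h4 : dot3 c b + dot3 b c + (dot3 b c + dot3 a d) = 0) :
    (dot3 ((cross3 c c + cross3 b d) + (cross3 b d + cross3 a e)) c
      + dot3 c ((cross3 c c + cross3 b d) + (cross3 b d + cross3 a e)))
      - 5/4 * ((dot3 (cross3 b c + cross3 a d) b + dot3 b (cross3 b c + cross3 a d)) * dot3 b b
          + dot3 b b * (dot3 (cross3 b c + cross3 a d) b + dot3 b (cross3 b c + cross3 a d)))
    = 2 * (dot3 d (cross3 a d) + dot3 c (cross3 b d + cross3 a e))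
      + ((3 * (dot3 c b + dot3 b c)) * (dot3 a (cross3 b c))
        + (3 * dot3 b b) * (dot3 b (cross3 b c) + dot3 a (cross3 c c + cross3 b d))) := by
  simp only [dot3, cross3, Pi.add_apply, Matrix.cons_val_zero, Matrix.cons_val_one,
    Matrix.head_cons, Matrix.cons_val_two, Matrix.tail_cons, pow_one] at *
  linear_combination
    (2 * (b 0*(c 1*d 2 - c 2*d 1) - b 1*(c 0*d 2 - c 2*d 0) + b 2*(c 0*d 1 - c 1*d 0))) * h1
    + (-2 * (a 0*(c 1*d 2 - c 2*d 1) - a 1*(c 0*d 2 - c 2*d 0) + a 2*(c 0*d 1 - c 1*d 0))) * h2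
    + (2 * (a 0*(b 1*d 2 - b 2*d 1) - a 1*(b 0*d 2 - b 2*d 0) + a 2*(b 0*d 1 - b 1*d 0))) * h3
    + (-2 * (a 0*(b 1*c 2 - b 2*c 1) - a 1*(b 0*c 2 - b 2*c 0) + a 2*(b 0*c 1 - b 1*c 0))) * h4

theorem boundary_vanish (a b c d : Fin 3 → ℝ) (h : cross3 a c = 0) :
    2 * dot3 c (cross3 a d) + 3 * (dot3 b b) * (dot3 a (cross3 b c)) = 0 := by
  have h0 := congrFun h 0
  have h1 := congrFun h 1
  have h2 := congrFun h 2
  simp only [cross3, dot3, Matrix.cons_val_zero, Matrix.cons_val_one, Matrix.head_cons,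
    Matrix.cons_val_two, Matrix.tail_cons, Pi.zero_apply] at *
  linear_combination (-2 * d 0 - 3 * (b 0 * b 0 + b 1 * b 1 + b 2 * b 2) * b 0) * h0
    + (-2 * d 1 - 3 * (b 0 * b 0 + b 1 * b 1 + b 2 * b 2) * b 1) * h1
    + (-2 * d 2 - 3 * (b 0 * b 0 + b 1 * b 1 + b 2 * b 2) * b 2) * h2



theorem const_of_deriv_zero_pos {E g : ℝ → ℝ}
    (hE : ∀ t, HasDerivAt E (g t) t) (hg : ∀ t > (0:ℝ), g t = 0) :
    ∀ t ≥ (0:ℝ), E t = E 0 := by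
  have claim1 : ∀ u t : ℝ, 0 < u → u ≤ t → E t = E u := by
    intro u t hu hut
    have hcont : ContinuousOn E (Icc u t) := fun x _ => ((hE x).continuousAt).continuousWithinAt
    have hderiv : ∀ x ∈ Ico u t, HasDerivWithinAt E 0 (Ici x) x := by
      intro x hx
      have : g x = 0 := hg x (lt_of_lt_of_le hu hx.1)
      simpa [this] using (hE x).hasDerivWithinAt
    have := constant_of_has_deriv_right_zero hcont hderiv t (by constructor <;> [exact hut; rfl])
    exact this
  intro t ht
  rcases eq_or_lt_of_le ht with h | h
  · rw [← h]
  -- limit as u → 0⁺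
  have h1 : Tendsto E (nhdsWithin 0 (Ioi 0)) (nhds (E 0)) :=
    ((hE 0).continuousAt).continuousWithinAt.tendsto
  have h2 : Tendsto E (nhdsWithin 0 (Ioi 0)) (nhds (E t)) := by
    have hev : ∀ᶠ u in nhdsWithin (0:ℝ) (Ioi 0), E u = E t := by
      filter_upwards [Ioo_mem_nhdsGT_of_mem (by constructor <;> [rfl; exact h] :
        (0:ℝ) ∈ Ico 0 t)] with u hu
      exact (claim1 u t hu.1 hu.2.le).symm
    exact Tendsto.congr' (by filter_upwards [hev] with u hu using hu.symm) tendsto_const_nhds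
  exact tendsto_nhds_unique h2 h1


/-- The main conservation result, in `(s,t) ∈ ℝ × ℝ` coordinates. -/
theorem main_aux (L : ℝ) (hL : 0 < L) (F : ℝ × ℝ → Fin 3 → ℝ)
    (hFsm : ContDiff ℝ (⊤ : ℕ∞) F)
    (hVFE : ∀ s ∈ Icc (0:ℝ) L, ∀ t ∈ Ici (0:ℝ),
      D2 F (s, t) = cross3 (F (s, t)) (D1 (D1 F) (s, t)))
    (hunit : ∀ s ∈ Icc (0:ℝ) L, ∀ t ∈ Ici (0:ℝ), dot3 (F (s, t)) (F (s, t)) = 1)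
    (hbc : ∀ t ∈ Ici (0:ℝ), F (0, t) = F (0, 0) ∧ F (L, t) = F (L, 0)) :
    ∀ t ∈ Ici (0:ℝ),
      ((∫ s in (0:ℝ)..L, dot3 (D1 (D1 F) (s, t)) (D1 (D1 F) (s, t)))
        - 5/4 * ∫ s in (0:ℝ)..L, (dot3 (D1 F (s, t)) (D1 F (s, t))) ^ 2)
      = ((∫ s in (0:ℝ)..L, dot3 (D1 (D1 F) (s, 0)) (D1 (D1 F) (s, 0)))
        - 5/4 * ∫ s in (0:ℝ)..L, (dot3 (D1 F (s, 0)) (D1 F (s, 0))) ^ 2) := by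
  -- abbreviations
  set B := D1 F with hBdef
  set C := D1 B with hCdef
  set Dd := D1 C with hDddef
  set Ee := D1 Dd with hEedef
  set G2 := D2 F with hG2def
  -- smoothness
  have hBsm : ContDiff ℝ (⊤ : ℕ∞) B := contDiff_D1 hFsm
  have hCsm : ContDiff ℝ (⊤ : ℕ∞) C := contDiff_D1 hBsm
  have hDdsm : ContDiff ℝ (⊤ : ℕ∞) Dd := contDiff_D1 hCsm
  have hEesm : ContDiff ℝ (⊤ : ℕ∞) Ee := contDiff_D1 hDdsm
  have hG2sm : ContDiff ℝ (⊤ : ℕ∞) G2 := contDiff_D2 hFsm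
  have hG2ssm : ContDiff ℝ (⊤ : ℕ∞) (D1 G2) := contDiff_D1 hG2sm
  have hdF : ∀ p, DifferentiableAt ℝ F p := fun p => hFsm.differentiable (by simp) p
  have hdB : ∀ p, DifferentiableAt ℝ B p := fun p => hBsm.differentiable (by simp) p
  have hdC : ∀ p, DifferentiableAt ℝ C p := fun p => hCsm.differentiable (by simp) p
  have hdDd : ∀ p, DifferentiableAt ℝ Dd p := fun p => hDdsm.differentiable (by simp) p
  have hdG2 : ∀ p, DifferentiableAt ℝ G2 p := fun p => hG2sm.differentiable (by simp) p
  have hdG2s : ∀ p, DifferentiableAt ℝ (D1 G2) p := fun p => hG2ssm.differentiable (by simp) p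
  -- the energy density
  set Φ : ℝ × ℝ → ℝ :=
    fun p => dot3 (C p) (C p) - 5/4 * (dot3 (B p) (B p)) ^ 2 with hΦdef
  have hΦsm : ContDiff ℝ (⊤ : ℕ∞) Φ :=
    (contDiff_dot3_comp hCsm hCsm).sub
      ((contDiff_const (c := (5/4 : ℝ))).mul ((contDiff_dot3_comp hBsm hBsm).pow 2))
  have hdΦ : ∀ p, DifferentiableAt ℝ Φ p := fun p => hΦsm.differentiable (by simp) p
  -- the flux
  set W : ℝ × ℝ → ℝ := fun p =>
    2 * dot3 (C p) (cross3 (F p) (Dd p))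
      + 3 * (dot3 (B p) (B p)) * (dot3 (F p) (cross3 (B p) (C p))) with hWdef
  set Wd : ℝ × ℝ → ℝ := fun p =>
    2 * (dot3 (Dd p) (cross3 (F p) (Dd p))
          + dot3 (C p) (cross3 (B p) (Dd p) + cross3 (F p) (Ee p)))
      + ((3 * (dot3 (C p) (B p) + dot3 (B p) (C p))) * (dot3 (F p) (cross3 (B p) (C p)))
        + (3 * dot3 (B p) (B p)) *
            (dot3 (B p) (cross3 (B p) (C p))
              + dot3 (F p) (cross3 (C p) (C p) + cross3 (B p) (Dd p)))) with hWddef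
  have hWdsm : ContDiff ℝ (⊤ : ℕ∞) Wd := by
    apply ContDiff.add
    · exact (contDiff_const (c := (2:ℝ))).mul
        ((contDiff_dot3_comp hDdsm (contDiff_cross3_comp hFsm hDdsm)).add
          (contDiff_dot3_comp hCsm ((contDiff_cross3_comp hBsm hDdsm).add
            (contDiff_cross3_comp hFsm hEesm))))
    · exact (((contDiff_const (c := (3:ℝ))).mul
          ((contDiff_dot3_comp hCsm hBsm).add (contDiff_dot3_comp hBsm hCsm))).mul
          (contDiff_dot3_comp hFsm (contDiff_cross3_comp hBsm hCsm))).add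
        (((contDiff_const (c := (3:ℝ))).mul (contDiff_dot3_comp hBsm hBsm)).mul
          ((contDiff_dot3_comp hBsm (contDiff_cross3_comp hBsm hCsm)).add
            (contDiff_dot3_comp hFsm ((contDiff_cross3_comp hCsm hCsm).add
              (contDiff_cross3_comp hBsm hDdsm)))))
  -- derivative of W in s
  have hW : ∀ s t : ℝ, HasDerivAt (fun s' => W (s', t)) (Wd (s, t)) s := by
    intro s t
    have sF := slice1 s t (hdF (s, t))
    have sB := slice1 s t (hdB (s, t))
    have sC := slice1 s t (hdC (s, t))
    have sDd := slice1 s t (hdDd (s, t))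
    exact ((hasDerivAt_dot3 sC (hasDerivAt_cross3 sF sDd)).const_mul 2).add
      (((hasDerivAt_dot3 sB sB).const_mul 3).mul
        (hasDerivAt_dot3 sF (hasDerivAt_cross3 sB sC)))
  -- pointwise constraints in the interior
  have base : ∀ t ∈ Ici (0:ℝ), ∀ s ∈ Ioo (0:ℝ) L, dot3 (F (s,t)) (B (s,t)) = 0 := by
    intro t ht s hs
    have h1 : HasDerivAt (fun s' => dot3 (F (s',t)) (F (s',t)))
        (dot3 (B (s,t)) (F (s,t)) + dot3 (F (s,t)) (B (s,t))) s :=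
      hasDerivAt_dot3 (slice1 s t (hdF _)) (slice1 s t (hdF _))
    have h2 : HasDerivAt (fun s' => dot3 (F (s',t)) (F (s',t))) 0 s := by
      refine (hasDerivAt_const s (1:ℝ)).congr_of_eventuallyEq ?_
      filter_upwards [isOpen_Ioo.mem_nhds hs] with s' hs'
      exact hunit s' (Ioo_subset_Icc_self hs') t ht
    have h3 := h1.unique h2
    have hcomm : dot3 (B (s,t)) (F (s,t)) = dot3 (F (s,t)) (B (s,t)) := by
      simp [dot3]; ring
    linarith [h3, hcomm.symm.le]
  have base2 : ∀ t ∈ Ici (0:ℝ), ∀ s ∈ Ioo (0:ℝ) L,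
      dot3 (B (s,t)) (B (s,t)) + dot3 (F (s,t)) (C (s,t)) = 0 := by
    intro t ht s hs
    have h1 : HasDerivAt (fun s' => dot3 (F (s',t)) (B (s',t)))
        (dot3 (B (s,t)) (B (s,t)) + dot3 (F (s,t)) (C (s,t))) s :=
      hasDerivAt_dot3 (slice1 s t (hdF _)) (slice1 s t (hdB _))
    have h2 : HasDerivAt (fun s' => dot3 (F (s',t)) (B (s',t))) 0 s := by
      refine (hasDerivAt_const s (0:ℝ)).congr_of_eventuallyEq ?_
      filter_upwards [isOpen_Ioo.mem_nhds hs] with s' hs'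
      exact base t ht s' hs'
    exact h1.unique h2
  have base3 : ∀ t ∈ Ici (0:ℝ), ∀ s ∈ Ioo (0:ℝ) L,
      dot3 (C (s,t)) (B (s,t)) + dot3 (B (s,t)) (C (s,t))
        + (dot3 (B (s,t)) (C (s,t)) + dot3 (F (s,t)) (Dd (s,t))) = 0 := by
    intro t ht s hs
    have h1 : HasDerivAt
        (fun s' => dot3 (B (s',t)) (B (s',t)) + dot3 (F (s',t)) (C (s',t)))
        ((dot3 (C (s,t)) (B (s,t)) + dot3 (B (s,t)) (C (s,t)))
          + (dot3 (B (s,t)) (C (s,t)) + dot3 (F (s,t)) (Dd (s,t)))) s :=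
      (hasDerivAt_dot3 (slice1 s t (hdB _)) (slice1 s t (hdB _))).add
        (hasDerivAt_dot3 (slice1 s t (hdF _)) (slice1 s t (hdC _)))
    have h2 : HasDerivAt
        (fun s' => dot3 (B (s',t)) (B (s',t)) + dot3 (F (s',t)) (C (s',t))) 0 s := by
      refine (hasDerivAt_const s (0:ℝ)).congr_of_eventuallyEq ?_
      filter_upwards [isOpen_Ioo.mem_nhds hs] with s' hs'
      exact base2 t ht s' hs'
    have := h1.unique h2
    linarith [this]
  -- first spatial derivative of the VFE right-hand side
  have hc6 : ∀ t ∈ Ici (0:ℝ), ∀ s ∈ Ioo (0:ℝ) L,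
      D1 G2 (s,t) = cross3 (B (s,t)) (C (s,t)) + cross3 (F (s,t)) (Dd (s,t)) := by
    intro t ht s hs
    have hrhs : HasDerivAt (fun s' => cross3 (F (s',t)) (C (s',t)))
        (cross3 (B (s,t)) (C (s,t)) + cross3 (F (s,t)) (Dd (s,t))) s :=
      hasDerivAt_cross3 (slice1 s t (hdF _)) (slice1 s t (hdC _))
    have hlhs : HasDerivAt (fun s' => G2 (s',t))
        (cross3 (B (s,t)) (C (s,t)) + cross3 (F (s,t)) (Dd (s,t))) s := by
      refine hrhs.congr_of_eventuallyEq ?_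
      filter_upwards [isOpen_Ioo.mem_nhds hs] with s' hs'
      exact hVFE s' (Ioo_subset_Icc_self hs') t ht
    exact (slice1 s t (hdG2 _)).unique hlhs
  have hc7 : ∀ t ∈ Ici (0:ℝ), ∀ s ∈ Ioo (0:ℝ) L,
      D1 (D1 G2) (s,t) = (cross3 (C (s,t)) (C (s,t)) + cross3 (B (s,t)) (Dd (s,t)))
        + (cross3 (B (s,t)) (Dd (s,t)) + cross3 (F (s,t)) (Ee (s,t))) := by
    intro t ht s hs
    have hrhs : HasDerivAt
        (fun s' => cross3 (B (s',t)) (C (s',t)) + cross3 (F (s',t)) (Dd (s',t)))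
        ((cross3 (C (s,t)) (C (s,t)) + cross3 (B (s,t)) (Dd (s,t)))
          + (cross3 (B (s,t)) (Dd (s,t)) + cross3 (F (s,t)) (Ee (s,t)))) s :=
      (hasDerivAt_cross3 (slice1 s t (hdB _)) (slice1 s t (hdC _))).add
        (hasDerivAt_cross3 (slice1 s t (hdF _)) (slice1 s t (hdDd _)))
    have hlhs : HasDerivAt (fun s' => D1 G2 (s',t))
        ((cross3 (C (s,t)) (C (s,t)) + cross3 (B (s,t)) (Dd (s,t)))
          + (cross3 (B (s,t)) (Dd (s,t)) + cross3 (F (s,t)) (Ee (s,t)))) s := by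
      refine hrhs.congr_of_eventuallyEq ?_
      filter_upwards [isOpen_Ioo.mem_nhds hs] with s' hs'
      exact hc6 t ht s' hs'
    exact (slice1 s t (hdG2s _)).unique hlhs
  -- time derivative of the energy density equals the flux derivative, in the interior
  have hptwise : ∀ t ∈ Ici (0:ℝ), ∀ s ∈ Ioo (0:ℝ) L, D2 Φ (s,t) = Wd (s,t) := by
    intro t ht s hs
    have s2B := slice2 s t (hdB (s,t))
    have s2C := slice2 s t (hdC (s,t))
    have hsq : HasDerivAt (fun t' => (dot3 (B (s,t')) (B (s,t'))) ^ 2)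
        ((dot3 (D2 B (s,t)) (B (s,t)) + dot3 (B (s,t)) (D2 B (s,t))) * dot3 (B (s,t)) (B (s,t))
          + dot3 (B (s,t)) (B (s,t))
            * (dot3 (D2 B (s,t)) (B (s,t)) + dot3 (B (s,t)) (D2 B (s,t)))) t := by
      have h := (hasDerivAt_dot3 s2B s2B).mul (hasDerivAt_dot3 s2B s2B)
      refine HasDerivAt.congr_of_eventuallyEq h ?_
      filter_upwards with t'
      rw [Pi.mul_apply]; ring
    have hΦt : HasDerivAt (fun t' => Φ (s,t'))
        ((dot3 (D2 C (s,t)) (C (s,t)) + dot3 (C (s,t)) (D2 C (s,t)))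
          - 5/4 * ((dot3 (D2 B (s,t)) (B (s,t)) + dot3 (B (s,t)) (D2 B (s,t)))
                      * dot3 (B (s,t)) (B (s,t))
              + dot3 (B (s,t)) (B (s,t))
                  * (dot3 (D2 B (s,t)) (B (s,t)) + dot3 (B (s,t)) (D2 B (s,t))))) t :=
      (hasDerivAt_dot3 s2C s2C).sub (hsq.const_mul (5/4))
    have hD2Φ := (slice2 s t (hdΦ (s,t))).unique hΦt
    -- Clairaut substitutions
    have e1 : D2 B (s,t) = D1 G2 (s,t) := (clairaut hFsm (s,t)).symm
    have e2fun : D2 B = D1 G2 := funext fun q => (clairaut hFsm q).symm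
    have e2 : D2 C (s,t) = D1 (D1 G2) (s,t) := by
      have := (clairaut hBsm (s,t)).symm
      rw [hCdef, this, e2fun]
    rw [hD2Φ, e1, e2, hc6 t ht s hs, hc7 t ht s hs]
    exact key_algebra (F (s,t)) (B (s,t)) (C (s,t)) (Dd (s,t)) (Ee (s,t))
      (hunit s (Ioo_subset_Icc_self hs) t ht) (base t ht s hs)
      (base2 t ht s hs) (base3 t ht s hs)
  -- boundary: the time derivative vanishes at s = 0 and s = L for t > 0
  have hbdry : ∀ x ∈ ({0, L} : Set ℝ), ∀ t > (0:ℝ),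
      cross3 (F (x,t)) (C (x,t)) = 0 := by
    intro x hx t ht
    have hx' : x ∈ Icc (0:ℝ) L := by
      rcases hx with h | h
      · simp [h, hL.le]
      · simp only [mem_singleton_iff] at h
        simp [h, hL.le]
    have hbcx : ∀ t' ∈ Ici (0:ℝ), F (x, t') = F (x, 0) := by
      intro t' ht'
      rcases hx with h | h
      · rw [h]; exact (hbc t' ht').1
      · simp only [mem_singleton_iff] at h; rw [h]; exact (hbc t' ht').2
    have h1 : HasDerivAt (fun t' => F (x, t')) (G2 (x,t)) t := slice2 x t (hdF _)
    have h2 : HasDerivAt (fun t' => F (x, t')) 0 t := by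
      refine (hasDerivAt_const t (F (x,0))).congr_of_eventuallyEq ?_
      filter_upwards [isOpen_Ioi.mem_nhds ht] with t' ht'
      exact hbcx t' (mem_Ici.mpr (le_of_lt ht'))
    have h3 : G2 (x,t) = 0 := h1.unique h2
    rw [← hVFE x hx' t (le_of_lt ht)]
    exact h3
  -- the t-derivative of the energy
  set Efun : ℝ → ℝ := fun t => ∫ s in (0:ℝ)..L, Φ (s,t) with hEfundef
  set g : ℝ → ℝ := fun t => ∫ s in (0:ℝ)..L, D2 Φ (s,t) with hgdef
  have hEfun : ∀ t, HasDerivAt Efun (g t) t := fun t => hasDerivAt_param_integral hΦsm L t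
  have hg0 : ∀ t > (0:ℝ), g t = 0 := by
    intro t ht
    have hI1 : (∫ s in (0:ℝ)..L, D2 Φ (s,t)) = ∫ s in (0:ℝ)..L, Wd (s,t) := by
      apply intervalIntegral.integral_congr_ae
      have hLnull : (volume : Measure ℝ) {L} = 0 := Real.volume_singleton
      filter_upwards [compl_mem_ae_iff.mpr hLnull] with s hsL hs
      rw [uIoc_of_le hL.le] at hs
      have hs' : s ∈ Ioo (0:ℝ) L := ⟨hs.1, lt_of_le_of_ne hs.2 hsL⟩
      exact hptwise t (le_of_lt ht) s hs'
    have hI2 : (∫ s in (0:ℝ)..L, Wd (s,t)) = W (L, t) - W (0, t) := by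
      apply intervalIntegral.integral_eq_sub_of_hasDerivAt
      · intro x _
        exact hW x t
      · exact (hWdsm.continuous.comp
          (continuous_id.prodMk continuous_const)).intervalIntegrable 0 L
    have hWL : W (L, t) = 0 := boundary_vanish _ _ _ _
      (hbdry L (by simp) t ht)
    have hW0 : W (0, t) = 0 := boundary_vanish _ _ _ _
      (hbdry 0 (by simp) t ht)
    rw [hgdef]
    simp only
    rw [hI1, hI2, hWL, hW0, sub_zero]
  have hconst := const_of_deriv_zero_pos hEfun hg0
  -- split the integral
  have hCcont : ∀ t : ℝ, Continuous fun s => dot3 (C (s,t)) (C (s,t)) := by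
    intro t
    exact ((contDiff_dot3_comp hCsm hCsm).continuous.comp
      (continuous_id.prodMk continuous_const))
  have hBcont : ∀ t : ℝ, Continuous fun s => (dot3 (B (s,t)) (B (s,t))) ^ 2 := by
    intro t
    exact (((contDiff_dot3_comp hBsm hBsm).pow 2).continuous.comp
      (continuous_id.prodMk continuous_const))
  have hsplit : ∀ t : ℝ, Efun t
      = (∫ s in (0:ℝ)..L, dot3 (C (s,t)) (C (s,t)))
        - 5/4 * ∫ s in (0:ℝ)..L, (dot3 (B (s,t)) (B (s,t))) ^ 2 := by
    intro t
    rw [hEfundef]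
    simp only [hΦdef]
    rw [intervalIntegral.integral_sub ((hCcont t).intervalIntegrable 0 L)
      ((show Continuous fun s => (5/4:ℝ) * (dot3 (B (s,t)) (B (s,t))) ^ 2 from continuous_const.mul (hBcont t)).intervalIntegrable 0 L)]
    congr 1
    exact intervalIntegral.integral_const_mul _ _
  intro t ht
  have := hconst t ht
  rw [hsplit t, hsplit 0] at this
  exact this

end VFEaux

/-- conservation of `E₁(v(t)) = ‖vₛₛ‖² − (5/4)‖|vₛ|²‖²` for unit-tangent
solutions of the vortex filament equation with time-independent boundary values. -/
theorem E1_conserved_for_VFE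
    (L : ℝ) (hL : 0 < L)
    (v : ℝ → ℝ → Fin 3 → ℝ)
    (hsm : ContDiff ℝ (⊤ : ℕ∞) (Function.uncurry v))
    (hVFE : ∀ s ∈ Set.Icc (0:ℝ) L, ∀ t ∈ Set.Ici (0:ℝ),
      pT v s t = cross3 (v s t) (pS (pS v) s t))
    (hunit : ∀ s ∈ Set.Icc (0:ℝ) L, ∀ t ∈ Set.Ici (0:ℝ), norm3 (v s t) = 1)
    (hbc : ∀ t ∈ Set.Ici (0:ℝ), v 0 t = v 0 0 ∧ v L t = v L 0) :
    ∀ t ∈ Set.Ici (0:ℝ),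
      (∫ s in (0:ℝ)..L, norm3 (pS (pS v) s t) ^ 2)
          - (5/4) * ∫ s in (0:ℝ)..L, norm3 (pS v s t) ^ 4
        = (∫ s in (0:ℝ)..L, norm3 (pS (pS v) s 0) ^ 2)
          - (5/4) * ∫ s in (0:ℝ)..L, norm3 (pS v s 0) ^ 4 := by
  have hsm' : ContDiff ℝ ((⊤ : ℕ∞) : WithTop ℕ∞) (Function.uncurry v) := hsm.of_le (by simp)
  set F : ℝ × ℝ → Fin 3 → ℝ := Function.uncurry v with hFdef
  have hdF : ∀ p : ℝ × ℝ, DifferentiableAt ℝ F p := fun p => hsm'.differentiable (by simp) p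
  have hdB : ∀ p : ℝ × ℝ, DifferentiableAt ℝ (VFEaux.D1 F) p := fun p =>
    (VFEaux.contDiff_D1 hsm').differentiable (by simp) p
  have hA : ∀ s t : ℝ, pS v s t = VFEaux.D1 F (s, t) := by
    intro s t
    exact (VFEaux.slice1 s t (hdF (s, t))).deriv
  have hB2 : ∀ s t : ℝ, pS (pS v) s t = VFEaux.D1 (VFEaux.D1 F) (s, t) := by
    intro s t
    have hfun : (fun s' => pS v s' t) = (fun s' => VFEaux.D1 F (s', t)) :=
      funext fun s' => hA s' t
    calc pS (pS v) s t = deriv (fun s' => pS v s' t) s := rfl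
      _ = deriv (fun s' => VFEaux.D1 F (s', t)) s := by rw [hfun]
      _ = VFEaux.D1 (VFEaux.D1 F) (s, t) := (VFEaux.slice1 s t (hdB (s, t))).deriv
  have hC2 : ∀ s t : ℝ, pT v s t = VFEaux.D2 F (s, t) := by
    intro s t
    exact (VFEaux.slice2 s t (hdF (s, t))).deriv
  have hVFE' : ∀ s ∈ Set.Icc (0:ℝ) L, ∀ t ∈ Set.Ici (0:ℝ),
      VFEaux.D2 F (s, t) = cross3 (F (s, t)) (VFEaux.D1 (VFEaux.D1 F) (s, t)) := by
    intro s hs t ht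
    rw [← hC2 s t, ← hB2 s t]
    exact hVFE s hs t ht
  have hunit' : ∀ s ∈ Set.Icc (0:ℝ) L, ∀ t ∈ Set.Ici (0:ℝ),
      dot3 (F (s, t)) (F (s, t)) = 1 := by
    intro s hs t ht
    have h2 : norm3 (F (s, t)) = 1 := hunit s hs t ht
    rw [← VFEaux.norm3_sq, h2, one_pow]
  have hbc' : ∀ t ∈ Set.Ici (0:ℝ), F (0, t) = F (0, 0) ∧ F (L, t) = F (L, 0) := by
    intro t ht
    exact ⟨(hbc t ht).1, (hbc t ht).2⟩
  have e2 : ∀ t : ℝ, (∫ s in (0:ℝ)..L, norm3 (pS (pS v) s t) ^ 2)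
      = ∫ s in (0:ℝ)..L, dot3 (VFEaux.D1 (VFEaux.D1 F) (s, t))
          (VFEaux.D1 (VFEaux.D1 F) (s, t)) := by
    intro t
    apply intervalIntegral.integral_congr
    intro s _
    show norm3 (pS (pS v) s t) ^ 2 = _
    rw [hB2 s t, VFEaux.norm3_sq]
  have e4 : ∀ t : ℝ, (∫ s in (0:ℝ)..L, norm3 (pS v s t) ^ 4)
      = ∫ s in (0:ℝ)..L, (dot3 (VFEaux.D1 F (s, t)) (VFEaux.D1 F (s, t))) ^ 2 := by
    intro t
    apply intervalIntegral.integral_congr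
    intro s _
    show norm3 (pS v s t) ^ 4 = _
    rw [hA s t, VFEaux.norm3_pow4]
  intro t ht
  rw [e2 t, e4 t, e2 0, e4 0]
  exact VFEaux.main_aux L hL F hsm' hVFE' hunit' hbc' t ht
end
end
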